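/- arXiv:1304.5760 — 5 statements merged into one kernel-verified Lean document; each statement's English description precedes it below -/
import Mathlib

section
/- Let (Y,w) be a relative 2e-design in the binary Hamming scheme H(n,2) with respect to u₀ = (0,…,0), supported on the p shells X_{r_1},…,X_{r_p}, and let S = X_{r_1} ∪ … ∪ X_{r_p}. Then |Y| ≥ dim(L_0(S) + L_1(S) + ⋯ + L_e(S)), the dimension of the span of the restrictions to S of the functions x ↦ Q_j(d(u,x)) for 0 ≤ j ≤ e and u ∈ X. -/
open Finset

/-- The vertex set of the binary Hamming scheme `H(n,2)`. -/
abbrev X (n : ℕ) := Fin n → Bool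

/-- The fixed base point `u₀ = (0,…,0)`. -/
def u₀ (n : ℕ) : X n := fun _ => false

/-- The `r`-th shell `X_r = {x : d(u₀,x) = r}`. -/
def shell (n r : ℕ) : Finset (X n) :=
  Finset.univ.filter (fun x => hammingDist (u₀ n) x = r)

/-- The Krawtchouk polynomial `Q_j(u)` for `H(n,2)`. -/
noncomputable def Q (n j u : ℕ) : ℝ :=
  ∑ i ∈ Finset.range (j + 1),
    (-1 : ℝ) ^ i * ((n - u).choose (j - i) : ℝ) * (u.choose i : ℝ)

/-- character attached to `c`. -/
def chi {n : ℕ} (c x : X n) : ℝ := ∏ i, if c i ∧ x i then (-1 : ℝ) else 1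

/-- Hamming weight. -/
def wt {n : ℕ} (c : X n) : ℕ := (Finset.univ.filter (fun i => c i = true)).card

lemma wt_eq_dist {n : ℕ} (c : X n) : hammingDist (u₀ n) c = wt c := by
  rw [hammingDist, wt]
  congr 1
  ext i
  simp only [mem_filter, mem_univ, true_and]
  cases h : c i <;> simp [u₀, h]

lemma mem_shell_iff {n r : ℕ} (c : X n) : c ∈ shell n r ↔ wt c = r := by
  simp [shell, wt_eq_dist]

lemma chi_mul_same_x {n : ℕ} (c d x : X n) :
    chi c x * chi d x = chi (fun i => xor (c i) (d i)) x := by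
  rw [chi, chi, chi, ← Finset.prod_mul_distrib]
  refine Finset.prod_congr rfl fun i _ => ?_
  cases hc : c i <;> cases hd : d i <;> cases hx : x i <;> norm_num

lemma chi_mul_same_c {n : ℕ} (c u x : X n) :
    chi c u * chi c x = chi c (fun i => xor (u i) (x i)) := by
  rw [chi, chi, chi, ← Finset.prod_mul_distrib]
  refine Finset.prod_congr rfl fun i _ => ?_
  cases hc : c i <;> cases hu : u i <;> cases hx : x i <;> norm_num

lemma wt_xor_le {n : ℕ} (c d : X n) : wt (fun i => xor (c i) (d i)) ≤ wt c + wt d := by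
  unfold wt
  refine le_trans (Finset.card_le_card ?_) (Finset.card_union_le _ _)
  intro i hi
  simp only [mem_filter, mem_union, mem_univ, true_and] at *
  cases hc : c i <;> cases hd : d i <;> simp_all

lemma chi_eq_pow {n : ℕ} (c x : X n) :
    chi c x = (-1 : ℝ) ^ (Finset.univ.filter (fun i => c i ∧ x i)).card := by
  rw [chi, Finset.prod_ite (fun _ => (-1 : ℝ)) (fun _ => (1 : ℝ))]
  simp

lemma fiber_card {n j i : ℕ} (hij : i ≤ j) (D : Finset (Fin n)) :
    ((Finset.powersetCard j (Finset.univ : Finset (Fin n))).filter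
      (fun A => (A ∩ D).card = i)).card = D.card.choose i * (n - D.card).choose (j - i) := by
  have hcompl : Dᶜ.card = n - D.card := by rw [Finset.card_compl]; simp
  rw [← Finset.card_powersetCard i D, ← hcompl, ← Finset.card_powersetCard (j - i) Dᶜ,
    ← Finset.card_product]
  apply Finset.card_nbij' (fun A => (A ∩ D, A \ D)) (fun P => P.1 ∪ P.2)
  · intro A hA
    simp only [Finset.mem_coe, mem_filter, Finset.mem_powersetCard] at hA
    simp only [Finset.mem_coe, Finset.mem_product, Finset.mem_powersetCard]
    refine ⟨⟨Finset.inter_subset_right, hA.2⟩, ?_, ?_⟩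
    · intro a ha; simp only [Finset.mem_compl]; exact fun h => (Finset.mem_sdiff.mp ha).2 h
    · have := Finset.card_inter_add_card_sdiff A D
      omega
  · intro P hP
    simp only [Finset.mem_coe, Finset.mem_product, Finset.mem_powersetCard] at hP
    obtain ⟨⟨h1, h1c⟩, h2, h2c⟩ := hP
    have hdisj : Disjoint P.1 P.2 := by
      refine Finset.disjoint_left.mpr fun a ha hb => ?_
      exact (Finset.mem_compl.mp (h2 hb)) (h1 ha)
    simp only [Finset.mem_coe, mem_filter, Finset.mem_powersetCard]
    have hinter : (P.1 ∪ P.2) ∩ D = P.1 := by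
      ext a
      simp only [Finset.mem_inter, Finset.mem_union]
      constructor
      · rintro ⟨h | h, haD⟩
        · exact h
        · exact absurd haD (Finset.mem_compl.mp (h2 h))
      · exact fun h => ⟨Or.inl h, h1 h⟩
    refine ⟨⟨Finset.subset_univ _, ?_⟩, by rw [hinter, h1c]⟩
    rw [Finset.card_union_of_disjoint hdisj, h1c, h2c]
    omega
  · intro A _
    have : (A ∩ D) ∪ (A \ D) = A := by
      ext a; by_cases h : a ∈ D <;> simp [h]
    simp [this]
  · intro P hP
    simp only [Finset.mem_coe, Finset.mem_product, Finset.mem_powersetCard] at hP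
    obtain ⟨⟨h1, _⟩, h2, _⟩ := hP
    have hinter : (P.1 ∪ P.2) ∩ D = P.1 := by
      ext a
      simp only [Finset.mem_inter, Finset.mem_union]
      constructor
      · rintro ⟨h | h, haD⟩
        · exact h
        · exact absurd haD (Finset.mem_compl.mp (h2 h))
      · exact fun h => ⟨Or.inl h, h1 h⟩
    have hsdiff : (P.1 ∪ P.2) \ D = P.2 := by
      ext a
      simp only [Finset.mem_sdiff, Finset.mem_union]
      constructor
      · rintro ⟨h | h, haD⟩
        · exact absurd (h1 h) haD
        · exact h
      · exact fun h => ⟨Or.inr h, Finset.mem_compl.mp (h2 h)⟩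
    simp [hinter, hsdiff]
lemma sum_powersetCard_pow {n : ℕ} (j : ℕ) (D : Finset (Fin n)) :
    ∑ A ∈ Finset.powersetCard j (Finset.univ : Finset (Fin n)),
      (-1 : ℝ) ^ ((A ∩ D).card) = Q n j D.card := by
  have hmaps : ∀ A ∈ Finset.powersetCard j (Finset.univ : Finset (Fin n)),
      (A ∩ D).card ∈ Finset.range (j + 1) := by
    intro A hA
    rw [Finset.mem_powersetCard] at hA
    rw [Finset.mem_range]
    have h1 : A ∩ D ⊆ A := Finset.inter_subset_left
    have := Finset.card_le_card h1
    omega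
  rw [← Finset.sum_fiberwise_of_maps_to hmaps, Q]
  refine Finset.sum_congr rfl fun i hi => ?_
  rw [Finset.mem_range] at hi
  have hij : i ≤ j := by omega
  have hconst : ∑ A ∈ (Finset.powersetCard j (Finset.univ : Finset (Fin n))).filter
      (fun A => (A ∩ D).card = i), (-1:ℝ)^((A ∩ D).card)
      = ∑ _A ∈ (Finset.powersetCard j (Finset.univ : Finset (Fin n))).filter
          (fun A => (A ∩ D).card = i), (-1:ℝ)^i :=
    Finset.sum_congr rfl fun A hA => by rw [(Finset.mem_filter.mp hA).2]
  rw [hconst, Finset.sum_const, fiber_card hij D, nsmul_eq_mul]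
  push_cast
  ring
lemma sum_chi_shell {n : ℕ} (j : ℕ) (z : X n) :
    ∑ c ∈ shell n j, chi c z = Q n j (wt z) := by
  set D : Finset (Fin n) := Finset.univ.filter (fun i => z i = true) with hD
  have hwt : wt z = D.card := rfl
  rw [hwt, ← sum_powersetCard_pow j D]
  refine Finset.sum_nbij' (fun c => Finset.univ.filter (fun i => c i = true))
    (fun A => fun i => decide (i ∈ A)) ?_ ?_ ?_ ?_ ?_
  · intro c hc
    rw [mem_shell_iff] at hc
    rw [Finset.mem_powersetCard]
    exact ⟨Finset.subset_univ _, hc⟩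
  · intro A hA
    rw [Finset.mem_powersetCard] at hA
    rw [mem_shell_iff, wt]
    rw [show Finset.univ.filter (fun i => decide (i ∈ A) = true) = A by
      ext a; simp]
    exact hA.2
  · intro c _
    funext i
    cases h : c i <;> simp [h]
  · intro A _
    ext a; simp
  · intro c _
    rw [chi_eq_pow]
    congr 2
    ext a
    simp [hD]
/-- Lemma A: Krawtchouk via characters. -/
lemma Q_dist_eq {n : ℕ} (j : ℕ) (u x : X n) :
    Q n j (hammingDist u x) = ∑ c ∈ shell n j, chi c u * chi c x := by
  have hz : hammingDist u x = wt (fun i => xor (u i) (x i)) := by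
    rw [hammingDist, wt]
    congr 1
    ext i
    simp only [mem_filter, mem_univ, true_and]
    cases h1 : u i <;> cases h2 : x i <;> simp [h1, h2]
  rw [hz, ← sum_chi_shell]
  exact Finset.sum_congr rfl fun c _ => (chi_mul_same_c c u x).symm

lemma sum_chi_eq_zero {n : ℕ} {e : X n} (he : e ≠ u₀ n) :
    ∑ u : X n, chi e u = 0 := by
  obtain ⟨i0, hi0⟩ : ∃ i0, e i0 = true := by
    by_contra h
    push_neg at h
    exact he (funext fun i => by simpa [u₀] using h i)
  have flip : ∀ u : X n, chi e (Function.update u i0 (!u i0)) = - chi e u := by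
    intro u
    rw [chi, chi, ← Finset.prod_erase_mul _ _ (Finset.mem_univ i0),
      ← Finset.prod_erase_mul _ _ (Finset.mem_univ i0)]
    have htail : ∀ i ∈ Finset.univ.erase i0,
        (if e i ∧ Function.update u i0 (!u i0) i then (-1:ℝ) else 1)
          = (if e i ∧ u i then (-1:ℝ) else 1) := by
      intro i hi
      rw [Function.update_of_ne (Finset.ne_of_mem_erase hi)]
    rw [Finset.prod_congr rfl htail, Function.update_self, hi0]
    cases h : u i0 <;> simp [h]
  have hσ : Function.Involutive (fun u : X n => Function.update u i0 (!u i0)) := by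
    intro u
    funext i
    by_cases h : i = i0
    · subst h; simp
    · simp [Function.update_of_ne h]
  let σ : Equiv.Perm (X n) := Function.Involutive.toPerm _ hσ
  have h2 : ∑ u : X n, chi e (Function.update u i0 (!u i0)) = ∑ u : X n, chi e u :=
    Equiv.sum_comp σ (chi e)
  have h3 : ∑ u : X n, chi e (Function.update u i0 (!u i0)) = - ∑ u : X n, chi e u := by
    rw [Finset.sum_congr rfl fun u _ => flip u, ← Finset.sum_neg_distrib]
  linarith [h2, h3]
lemma chi_u0 {n : ℕ} (x : X n) : chi (u₀ n) x = 1 := by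
  rw [chi]
  refine Finset.prod_eq_one fun i _ => ?_
  simp [u₀]

lemma sum_chi_eq {n : ℕ} (e : X n) :
    ∑ u : X n, chi e u = if e = u₀ n then (2 ^ n : ℝ) else 0 := by
  by_cases h : e = u₀ n
  · subst h
    simp only [if_pos rfl]
    rw [Finset.sum_congr rfl fun u _ => chi_u0 u, Finset.sum_const, nsmul_eq_mul, mul_one]
    norm_num [Fintype.card_fun]
  · rw [if_neg h]
    exact sum_chi_eq_zero h

lemma chi_orthogonal {n : ℕ} (c d : X n) :
    ∑ u : X n, chi c u * chi d u = if c = d then (2 ^ n : ℝ) else 0 := by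
  rw [Finset.sum_congr rfl fun u _ => chi_mul_same_x c d u, sum_chi_eq]
  congr 1
  simp only [eq_iff_iff]
  constructor
  · intro h
    funext i
    have := congrFun h i
    simp only [u₀] at this
    cases hc : c i <;> cases hd : d i <;> simp_all
  · intro h
    subst h
    funext i
    simp [u₀]
lemma chi_inversion {n : ℕ} (c x : X n) :
    (2 ^ n : ℝ) * chi c x = ∑ u : X n, chi c u * Q n (wt c) (hammingDist u x) := by
  have : ∀ u : X n, chi c u * Q n (wt c) (hammingDist u x)
      = ∑ c' ∈ shell n (wt c), chi c u * (chi c' u * chi c' x) := by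
    intro u
    rw [Q_dist_eq, Finset.mul_sum]
  rw [Finset.sum_congr rfl fun u _ => this u, Finset.sum_comm]
  have hswap : ∀ c' : X n, ∑ u : X n, chi c u * (chi c' u * chi c' x)
      = (if c = c' then (2^n : ℝ) else 0) * chi c' x := by
    intro c'
    rw [← chi_orthogonal, Finset.sum_mul]
    exact Finset.sum_congr rfl fun u _ => by ring
  rw [Finset.sum_congr rfl fun c' _ => hswap c']
  have hstep : ∀ c' : X n, (if c = c' then (2^n:ℝ) else 0) * chi c' x
      = (if c = c' then (2^n:ℝ) * chi c' x else 0) := by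
    intro c'; split <;> ring
  rw [Finset.sum_congr rfl fun c' _ => hstep c']
  have hmem : c ∈ shell n (wt c) := (mem_shell_iff c).mpr rfl
  rw [Finset.sum_ite_eq (shell n (wt c)) c (fun c' => (2:ℝ)^n * chi c' x), if_pos hmem]
/-- The total weight `W_r = Σ_{y ∈ Y ∩ X_r} w(y)`. -/
noncomputable def Wt (n : ℕ) (Y : Finset (X n)) (w : X n → ℝ) (r : ℕ) : ℝ :=
  ∑ y ∈ Y.filter (fun y => hammingDist (u₀ n) y = r), w y

/-- The design functional. -/
noncomputable def Phi (n : ℕ) (Y : Finset (X n)) (w : X n → ℝ) (R : Finset ℕ) :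
    (X n → ℝ) →ₗ[ℝ] ℝ where
  toFun g := (∑ r ∈ R, Wt n Y w r / (n.choose r : ℝ) * ∑ x ∈ shell n r, g x)
    - ∑ y ∈ Y, w y * g y
  map_add' g g' := by
    simp only [Pi.add_apply, mul_add, Finset.sum_add_distrib]
    ring
  map_smul' a g := by
    simp only [Pi.smul_apply, smul_eq_mul, RingHom.id_apply, Finset.mul_sum]
    rw [mul_sub, Finset.mul_sum, Finset.mul_sum]
    congr 1
    · refine Finset.sum_congr rfl fun r _ => ?_
      rw [Finset.mul_sum]
      exact Finset.sum_congr rfl fun x _ => by ring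
    · exact Finset.sum_congr rfl fun y _ => by ring

lemma Phi_apply (n : ℕ) (Y : Finset (X n)) (w : X n → ℝ) (R : Finset ℕ) (g : X n → ℝ) :
    Phi n Y w R g = (∑ r ∈ R, Wt n Y w r / (n.choose r : ℝ) * ∑ x ∈ shell n r, g x)
      - ∑ y ∈ Y, w y * g y := rfl
/-- `(Y,w)` is a relative `t`-design of `H(n,2)` with respect to `u₀ = (0,…,0)`,
supported on the shells `X_r`, `r ∈ R`: `Y` lies in the union of these shells,
meets each of them, has positive weights, and the design identity holds for all
Krawtchouk functions of degree `j ≤ t`. -/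
def IsRelativeDesign (n t : ℕ) (Y : Finset (X n)) (w : X n → ℝ) (R : Finset ℕ) : Prop :=
  (∀ y ∈ Y, hammingDist (u₀ n) y ∈ R) ∧
  (∀ r ∈ R, ∃ y ∈ Y, hammingDist (u₀ n) y = r) ∧
  (∀ y ∈ Y, 0 < w y) ∧
  (∀ j ≤ t, ∀ u : X n,
    ∑ r ∈ R, Wt n Y w r / (n.choose r : ℝ) * ∑ x ∈ shell n r, Q n j (hammingDist u x)
      = ∑ y ∈ Y, w y * Q n j (hammingDist u y))

lemma Phi_chi {n t : ℕ} {Y : Finset (X n)} {w : X n → ℝ} {R : Finset ℕ}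
    (hdes : IsRelativeDesign n t Y w R) (c : X n) (hc : wt c ≤ t) :
    Phi n Y w R (chi c) = 0 := by
  have hQ : ∀ u : X n, Phi n Y w R (fun x => Q n (wt c) (hammingDist u x)) = 0 :=
    fun u => sub_eq_zero.mpr (hdes.2.2.2 (wt c) hc u)
  have hfun : chi c = (2 ^ n : ℝ)⁻¹ •
      ∑ u : X n, chi c u • (fun x => Q n (wt c) (hammingDist u x)) := by
    funext x
    simp only [Pi.smul_apply, Finset.sum_apply, smul_eq_mul]
    rw [← chi_inversion c x]
    rw [← mul_assoc, inv_mul_cancel₀ (by positivity : (2:ℝ)^n ≠ 0), one_mul]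
  rw [hfun, map_smul, map_sum]
  rw [Finset.sum_congr rfl fun u _ => by rw [map_smul, hQ u, smul_zero]]
  simp
/-- `dim(L_0(S)+⋯+L_e(S))`: the dimension of the span of the restrictions to
`S = ⋃_{r ∈ R} X_r` of the functions `x ↦ Q_j(d(u,x))`, `0 ≤ j ≤ e`, `u ∈ X`. -/
noncomputable def LDim (n e : ℕ) (R : Finset ℕ) : ℕ :=
  Module.finrank ℝ (Submodule.span ℝ
    { f : { x // x ∈ R.biUnion (shell n) } → ℝ |
      ∃ j ≤ e, ∃ u : X n, f = fun x => Q n j (hammingDist u x.1) })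

/-- Fisher-type inequality for relative `2e`-designs in `H(n,2)`. -/
theorem relativeDesign_card_lower_bound (n e : ℕ) (Y : Finset (X n)) (w : X n → ℝ)
    (R : Finset ℕ) (hdes : IsRelativeDesign n (2 * e) Y w R) :
    LDim n e R ≤ Y.card := by
  classical
  set S : Finset (X n) := R.biUnion (shell n) with hS
  have hYS : ∀ y ∈ Y, y ∈ S := by
    intro y hy
    rw [hS, Finset.mem_biUnion]
    exact ⟨hammingDist (u₀ n) y, hdes.1 y hy, by simp [shell]⟩
  -- the span of truncated characters
  set G : X n → ({ x // x ∈ S } → ℝ) :=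
    fun c => if wt c ≤ e then (fun x => chi c x.1) else 0 with hG
  set T : Submodule ℝ ({ x // x ∈ S } → ℝ) := Submodule.span ℝ (Set.range G) with hT
  -- Step 1 : the LDim span is contained in T
  have hVT : Submodule.span ℝ
      { f : { x // x ∈ S } → ℝ |
        ∃ j ≤ e, ∃ u : X n, f = fun x => Q n j (hammingDist u x.1) } ≤ T := by
    rw [Submodule.span_le]
    rintro f ⟨j, hj, u, rfl⟩
    have : (fun x : { x // x ∈ S } => Q n j (hammingDist u x.1))
        = ∑ c ∈ shell n j, chi c u • G c := by
      funext x
      rw [Q_dist_eq]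
      simp only [Finset.sum_apply, Pi.smul_apply, smul_eq_mul]
      refine Finset.sum_congr rfl fun c hc => ?_
      have hwc : wt c = j := (mem_shell_iff c).mp hc
      rw [hG]
      simp only [hwc, hj, if_pos]
    rw [this]
    exact Submodule.sum_mem T fun c _ =>
      Submodule.smul_mem T _ (Submodule.subset_span (Set.mem_range_self c))
  -- Step 2 : restriction to Y is injective on T
  set Φmap : ({ x // x ∈ S } → ℝ) →ₗ[ℝ] ({ y // y ∈ Y } → ℝ) :=
    LinearMap.funLeft ℝ ℝ (fun y => ⟨y.1, hYS y.1 y.2⟩) with hΦmap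
  have hinj : Function.Injective (Φmap.comp T.subtype) := by
    rw [← LinearMap.ker_eq_bot, LinearMap.ker_eq_bot']
    intro m hm
    obtain ⟨g, hg⟩ := (Submodule.mem_span_range_iff_exists_fun ℝ).mp m.2
    set F : X n → ℝ := fun x => ∑ c : X n, g c * (if wt c ≤ e then chi c x else 0) with hF
    have hFx : ∀ x (hx : x ∈ S), F x = m.1 ⟨x, hx⟩ := by
      intro x hx
      rw [← hg, hF]
      simp only [Finset.sum_apply, Pi.smul_apply, smul_eq_mul]
      refine Finset.sum_congr rfl fun c _ => ?_
      rw [hG]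
      by_cases h : wt c ≤ e <;> simp [h]
    have hFY : ∀ y ∈ Y, F y = 0 := by
      intro y hy
      rw [hFx y (hYS y hy)]
      have := congrFun hm ⟨y, hy⟩
      simpa [hΦmap, LinearMap.funLeft] using this
    -- Φ of the squared function is zero
    have hPhiF2 : Phi n Y w R (fun x => F x * F x) = 0 := by
      have hexp : (fun x => F x * F x) = ∑ c : X n, ∑ c' : X n,
          (g c * g c') • (if wt c ≤ e ∧ wt c' ≤ e
            then chi (fun i => xor (c i) (c' i)) else 0) := by
        funext x
        simp only [Finset.sum_apply, Pi.smul_apply, smul_eq_mul, hF]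
        rw [Finset.sum_mul_sum]
        refine Finset.sum_congr rfl fun c _ => Finset.sum_congr rfl fun c' _ => ?_
        by_cases h1 : wt c ≤ e <;> by_cases h2 : wt c' ≤ e <;>
          simp [h1, h2, ← chi_mul_same_x] <;> ring
      rw [hexp, map_sum]
      refine Finset.sum_eq_zero fun c _ => ?_
      rw [map_sum]
      refine Finset.sum_eq_zero fun c' _ => ?_
      rw [map_smul]
      by_cases h : wt c ≤ e ∧ wt c' ≤ e
      · rw [if_pos h, Phi_chi hdes _ (le_trans (wt_xor_le c c') (by omega)), smul_zero]
      · rw [if_neg h, map_zero, smul_zero]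
    -- hence the shell sums of squares vanish
    have hshell : ∀ r ∈ R, ∀ x ∈ shell n r, F x = 0 := by
      intro r hr x hx
      have hY0 : ∑ y ∈ Y, w y * (F y * F y) = 0 :=
        Finset.sum_eq_zero fun y hy => by rw [hFY y hy]; ring
      have hsum : ∑ r ∈ R, Wt n Y w r / (n.choose r : ℝ)
          * ∑ x ∈ shell n r, F x * F x = 0 := by
        have := hPhiF2
        rw [Phi_apply, hY0, sub_zero] at this
        exact this
      have hterm_nonneg : ∀ r ∈ R, 0 ≤ Wt n Y w r / (n.choose r : ℝ)
          * ∑ x ∈ shell n r, F x * F x := by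
        intro r hr
        apply mul_nonneg
        · apply div_nonneg
          · exact Finset.sum_nonneg fun y hy =>
              le_of_lt (hdes.2.2.1 y (Finset.mem_filter.mp hy).1)
          · positivity
        · exact Finset.sum_nonneg fun x _ => mul_self_nonneg _
      have hterm0 : Wt n Y w r / (n.choose r : ℝ) * ∑ x ∈ shell n r, F x * F x = 0 :=
        (Finset.sum_eq_zero_iff_of_nonneg hterm_nonneg).mp hsum r hr
      obtain ⟨y, hyY, hyr⟩ := hdes.2.1 r hr
      have hWpos : 0 < Wt n Y w r := by
        apply Finset.sum_pos
        · exact fun z hz => hdes.2.2.1 z (Finset.mem_filter.mp hz).1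
        · exact ⟨y, Finset.mem_filter.mpr ⟨hyY, hyr⟩⟩
      have hrn : r ≤ n := by
        rw [← hyr]
        calc hammingDist (u₀ n) y ≤ Fintype.card (Fin n) := hammingDist_le_card_fintype
        _ = n := Fintype.card_fin n
      have hCpos : (0:ℝ) < (n.choose r : ℝ) := by
        exact_mod_cast Nat.choose_pos hrn
      have hsq0 : ∑ x ∈ shell n r, F x * F x = 0 := by
        have hne : Wt n Y w r / (n.choose r : ℝ) ≠ 0 := ne_of_gt (div_pos hWpos hCpos)
        exact (mul_eq_zero.mp hterm0).resolve_left hne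
      have := (Finset.sum_eq_zero_iff_of_nonneg
        (fun x _ => mul_self_nonneg (F x))).mp hsq0 x hx
      exact mul_self_eq_zero.mp this
    -- conclude m = 0
    have : m.1 = 0 := by
      funext x
      obtain ⟨r, hr, hxr⟩ := Finset.mem_biUnion.mp x.2
      rw [← hFx x.1 x.2]
      exact hshell r hr x.1 hxr
    exact Subtype.ext this
  -- put everything together
  have h1 : LDim n e R ≤ Module.finrank ℝ T := Submodule.finrank_mono hVT
  have h2 : Module.finrank ℝ T ≤ Module.finrank ℝ ({ y // y ∈ Y } → ℝ) :=
    LinearMap.finrank_le_finrank_of_injective hinj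
  have h3 : Module.finrank ℝ ({ y // y ∈ Y } → ℝ) = Y.card := by
    rw [Module.finrank_fintype_fun_eq_card, Fintype.card_coe]
  omega
end

section
/- Let (Y,w) be a relative 2e-design in the binary Hamming scheme H(n,2) with respect to u₀ = (0,…,0), supported on the p shells X_{r_1},…,X_{r_p} with S = X_{r_1} ∪ … ∪ X_{r_p}, and assume it is tight, i.e. |Y| = dim(L_0(S) + L_1(S) + ⋯ + L_e(S)). Then the weight function w is constant on each set Y_{r_i} = Y ∩ X_{r_i}, for i = 1,…,p. -/
open Finset
open scoped symmDiff

namespace TD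

variable {n : ℕ}

noncomputable def chi (T : Finset (Fin n)) (x : X n) : ℝ :=
  ∏ i ∈ T, (if x i then (-1 : ℝ) else 1)

lemma chi_mul (T T' : Finset (Fin n)) (x : X n) :
    chi T x * chi T' x = chi (T ∆ T') x := by
  classical
  have h1 : chi T x = chi (T \ T') x * chi (T ∩ T') x := by
    rw [chi, chi, chi, ← prod_union (disjoint_sdiff_inter T T'), sdiff_union_inter]
  have h2 : chi T' x = chi (T' \ T) x * chi (T' ∩ T) x := by
    rw [chi, chi, chi, ← prod_union (disjoint_sdiff_inter T' T), sdiff_union_inter]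
  have h3 : chi (T ∩ T') x * chi (T' ∩ T) x = 1 := by
    rw [inter_comm, chi, ← prod_mul_distrib]
    apply prod_eq_one; intro i _
    by_cases h : x i <;> simp [h]
  have h4 : chi (T ∆ T') x = chi (T \ T') x * chi (T' \ T) x := by
    rw [chi, chi, chi, ← prod_union disjoint_sdiff_sdiff]
    congr 1
  rw [h1, h2, h4, mul_mul_mul_comm, h3, mul_one]

lemma chi_empty (x : X n) : chi (∅ : Finset (Fin n)) x = 1 := by simp [chi]

lemma chi_sq (T : Finset (Fin n)) (x : X n) : chi T x * chi T x = 1 := by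
  rw [chi_mul, symmDiff_self]; exact chi_empty x

lemma chi_univ_prod (T : Finset (Fin n)) (u : X n) :
    chi T u = ∏ i : Fin n, (if i ∈ T then (if u i then (-1 : ℝ) else 1) else 1) := by
  rw [chi]
  rw [show (∏ i ∈ T, (if u i then (-1 : ℝ) else 1))
      = ∏ i ∈ T, (if i ∈ T then (if u i then (-1 : ℝ) else 1) else 1) from
    prod_congr rfl (fun i hi => by simp [hi])]
  exact prod_subset (subset_univ T) (fun i _ hi => by simp [hi])

lemma sum_chi (T : Finset (Fin n)) :
    ∑ u : X n, chi T u = if T = ∅ then (2 : ℝ) ^ n else 0 := by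
  classical
  simp_rw [chi_univ_prod]
  rw [← Fintype.prod_sum (fun (i : Fin n) (b : Bool) =>
      (if i ∈ T then (if b then (-1 : ℝ) else 1) else 1))]
  have hfac : ∀ i : Fin n,
      (∑ b : Bool, (if i ∈ T then (if b then (-1 : ℝ) else 1) else 1))
        = if i ∈ T then 0 else 2 := by
    intro i; by_cases h : i ∈ T <;> simp [h]
  simp_rw [hfac]
  by_cases hT : T = ∅
  · simp [hT]
  · rw [if_neg hT]
    obtain ⟨i, hi⟩ := nonempty_iff_ne_empty.2 hT
    exact prod_eq_zero (mem_univ i) (by simp [hi])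

lemma sum_chi_mul (T T' : Finset (Fin n)) :
    ∑ u : X n, chi T u * chi T' u = if T = T' then (2 : ℝ) ^ n else 0 := by
  simp_rw [chi_mul, sum_chi, symmDiff_eq_empty]

lemma count_lemma (A : Finset (Fin n)) (j : ℕ) :
    ∑ T ∈ powersetCard j (univ : Finset (Fin n)), (-1 : ℝ) ^ (T ∩ A).card
      = Q n j A.card := by
  classical
  have key : ∑ T ∈ powersetCard j (univ : Finset (Fin n)), (-1 : ℝ) ^ (T ∩ A).card
      = ∑ p ∈ (Finset.range (j+1)).sigma
          (fun i => powersetCard i A ×ˢ powersetCard (j-i) Aᶜ), (-1 : ℝ) ^ p.1 := by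
    refine Finset.sum_nbij'
      (i := fun T => (⟨(T ∩ A).card, (T ∩ A, T \ A)⟩ :
        (i : ℕ) × (Finset (Fin n) × Finset (Fin n))))
      (j := fun p => p.2.1 ∪ p.2.2) ?_ ?_ ?_ ?_ ?_
    · intro T hT
      rw [mem_powersetCard_univ] at hT
      have hc : (T ∩ A).card + (T \ A).card = j := by
        rw [card_inter_add_card_sdiff, hT]
      rw [Finset.mem_sigma, Finset.mem_range, Finset.mem_product, mem_powersetCard,
        mem_powersetCard]
      refine ⟨?_, ⟨inter_subset_right, rfl⟩,
        ⟨fun i hi => mem_compl.2 (mem_sdiff.1 hi).2, ?_⟩⟩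
      · show #(T ∩ A) < j + 1
        omega
      · show #(T \ A) = j - #(T ∩ A)
        omega
    · rintro ⟨i, T₁, T₂⟩ hp
      simp only [Finset.mem_sigma, Finset.mem_range, Finset.mem_product,
        mem_powersetCard] at hp
      obtain ⟨hi, ⟨hT₁, hc₁⟩, ⟨hT₂, hc₂⟩⟩ := hp
      have hd : Disjoint T₁ T₂ :=
        disjoint_left.2 fun a ha₁ ha₂ => (mem_compl.1 (hT₂ ha₂)) (hT₁ ha₁)
      rw [mem_powersetCard_univ]
      show (T₁ ∪ T₂).card = j
      rw [card_union_of_disjoint hd]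
      omega
    · intro T hT
      show T ∩ A ∪ T \ A = T
      exact sup_inf_sdiff T A
    · rintro ⟨i, T₁, T₂⟩ hp
      simp only [Finset.mem_sigma, Finset.mem_range, Finset.mem_product,
        mem_powersetCard] at hp
      obtain ⟨hi, ⟨hT₁, hc₁⟩, ⟨hT₂, hc₂⟩⟩ := hp
      have hd : Disjoint T₁ T₂ := by
        refine disjoint_left.2 fun a ha₁ ha₂ => ?_
        exact (mem_compl.1 (hT₂ ha₂)) (hT₁ ha₁)
      have h1 : (T₁ ∪ T₂) ∩ A = T₁ := by
        rw [union_inter_distrib_right]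
        have e1 : T₁ ∩ A = T₁ := inter_eq_left.2 hT₁
        have e2 : T₂ ∩ A = ∅ := by
          refine eq_empty_of_forall_notMem fun a ha => ?_
          rcases mem_inter.1 ha with ⟨h2, h3⟩
          exact (mem_compl.1 (hT₂ h2)) h3
        rw [e1, e2, union_empty]
      have h2 : (T₁ ∪ T₂) \ A = T₂ := by
        rw [union_sdiff_distrib]
        have e1 : T₁ \ A = ∅ := sdiff_eq_empty_iff_subset.2 hT₁
        have e2 : T₂ \ A = T₂ := by
          rw [Finset.sdiff_eq_self_iff_disjoint]
          exact disjoint_left.2 fun a ha h => (mem_compl.1 (hT₂ ha)) h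
        rw [e1, e2, empty_union]
      simp [h1, h2, hc₁]
    · intro T _; rfl
  rw [key, Finset.sum_sigma, Q]
  refine Finset.sum_congr rfl (fun i _ => ?_)
  dsimp only
  rw [Finset.sum_const, Finset.card_product, card_powersetCard, card_powersetCard,
    card_compl, Fintype.card_fin, nsmul_eq_mul]
  push_cast
  ring

lemma hammingDist_eq_card (u x : X n) :
    hammingDist u x = (univ.filter (fun i => u i ≠ x i)).card := rfl

lemma chi_mul_pair (T : Finset (Fin n)) (u x : X n) :
    chi T u * chi T x = (-1 : ℝ) ^ (T ∩ (univ.filter (fun i => u i ≠ x i))).card := by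
  classical
  rw [chi, chi, ← prod_mul_distrib]
  have h : ∀ i ∈ T, (if u i then (-1 : ℝ) else 1) * (if x i then (-1 : ℝ) else 1)
      = if i ∈ univ.filter (fun i => u i ≠ x i) then (-1 : ℝ) else 1 := by
    intro i _
    by_cases hu : u i <;> by_cases hx : x i <;> simp [hu, hx]
  rw [prod_congr rfl h, ← prod_filter_mul_prod_filter_not T
    (fun i => i ∈ univ.filter (fun i => u i ≠ x i))]
  rw [prod_congr rfl (fun i hi => if_pos (mem_filter.1 hi).2),
    prod_congr rfl (fun i hi => if_neg (mem_filter.1 hi).2), prod_const, prod_const_one,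
    mul_one]
  congr 1

lemma Q_chi (j : ℕ) (u x : X n) :
    Q n j (hammingDist u x)
      = ∑ T ∈ powersetCard j (univ : Finset (Fin n)), chi T u * chi T x := by
  rw [hammingDist_eq_card, ← count_lemma]
  exact Finset.sum_congr rfl (fun T _ => (chi_mul_pair T u x).symm)

lemma sum_chi_Q (T : Finset (Fin n)) (x : X n) :
    ∑ u : X n, chi T u * Q n T.card (hammingDist u x) = 2 ^ n * chi T x := by
  classical
  simp_rw [Q_chi, mul_sum]
  rw [Finset.sum_comm]
  have h : ∀ T' ∈ powersetCard T.card (univ : Finset (Fin n)),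
      ∑ u : X n, chi T u * (chi T' u * chi T' x)
        = (if T = T' then (2:ℝ)^n * chi T' x else 0) := by
    intro T' _
    have : ∑ u : X n, chi T u * (chi T' u * chi T' x)
        = (∑ u : X n, chi T u * chi T' u) * chi T' x := by
      rw [Finset.sum_mul]
      exact Finset.sum_congr rfl (fun u _ => by ring)
    rw [this, sum_chi_mul, ite_mul, zero_mul]
  rw [Finset.sum_congr rfl h]
  rw [Finset.sum_ite_eq (powersetCard T.card (univ : Finset (Fin n))) T
    (fun T' => (2:ℝ)^n * chi T' x), if_pos (mem_powersetCard_univ.2 rfl)]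

section Design

variable (e : ℕ)

/-- Index set: all subsets of coordinates of size at most `e`. -/
def Tset (n e : ℕ) : Finset (Finset (Fin n)) :=
  Finset.univ.filter (fun T => T.card ≤ e)

/-- The generic element of the span of characters of degree at most `e`. -/
noncomputable def Lfun (e : ℕ) (c : Finset (Fin n) → ℝ) (x : X n) : ℝ :=
  ∑ T ∈ Tset n e, c T * chi T x

variable {Y : Finset (X n)} {w : X n → ℝ} {R : Finset ℕ}

/-- The design functional identity for a function `f`. -/
def DD (Y : Finset (X n)) (w : X n → ℝ) (R : Finset ℕ) (f : X n → ℝ) : Prop :=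
  ∑ r ∈ R, Wt n Y w r / (n.choose r : ℝ) * ∑ x ∈ shell n r, f x
    = ∑ y ∈ Y, w y * f y

lemma DD_sum {ι : Type*} (s : Finset ι) (F : ι → X n → ℝ) (c : ι → ℝ)
    (h : ∀ i ∈ s, DD Y w R (F i)) :
    DD Y w R (fun x => ∑ i ∈ s, c i * F i x) := by
  unfold DD at h ⊢
  have lhs : ∀ r ∈ R, Wt n Y w r / (n.choose r : ℝ)
        * ∑ x ∈ shell n r, (∑ i ∈ s, c i * F i x)
      = ∑ i ∈ s, c i * (Wt n Y w r / (n.choose r : ℝ) * ∑ x ∈ shell n r, F i x) := by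
    intro r _
    rw [Finset.sum_comm]
    rw [Finset.mul_sum]
    exact Finset.sum_congr rfl (fun i _ => by rw [← Finset.mul_sum]; ring)
  rw [Finset.sum_congr rfl lhs, Finset.sum_comm]
  have rhs : ∀ y ∈ Y, w y * (∑ i ∈ s, c i * F i y)
      = ∑ i ∈ s, c i * (w y * F i y) := by
    intro y _
    rw [Finset.mul_sum]
    exact Finset.sum_congr rfl (fun i _ => by ring)
  rw [Finset.sum_congr rfl rhs, Finset.sum_comm (s := Y)]
  refine Finset.sum_congr rfl (fun i hi => ?_)
  rw [← Finset.mul_sum, ← Finset.mul_sum, h i hi]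

lemma DD_chi (t : ℕ) (hdes : IsRelativeDesign n t Y w R)
    (T : Finset (Fin n)) (hT : T.card ≤ t) :
    DD Y w R (chi T) := by
  have h := DD_sum (Y := Y) (w := w) (R := R) (univ : Finset (X n))
    (fun u x => Q n T.card (hammingDist u x))
    (fun u => ((2:ℝ)^n)⁻¹ * chi T u)
    (fun u _ => hdes.2.2.2 T.card hT u)
  have heq : (fun x => ∑ u : X n, ((2:ℝ)^n)⁻¹ * chi T u * Q n T.card (hammingDist u x))
      = chi T := by
    funext x
    have : ∑ u : X n, ((2:ℝ)^n)⁻¹ * chi T u * Q n T.card (hammingDist u x)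
        = ((2:ℝ)^n)⁻¹ * ∑ u : X n, chi T u * Q n T.card (hammingDist u x) := by
      rw [Finset.mul_sum]
      exact Finset.sum_congr rfl (fun u _ => by ring)
    rw [this, sum_chi_Q, inv_mul_cancel_left₀ (by positivity)]
  rwa [heq] at h

lemma DD_mul (t : ℕ) (hdes : IsRelativeDesign n t Y w R) (e : ℕ) (he : 2 * e ≤ t)
    (c c' : Finset (Fin n) → ℝ) :
    DD Y w R (fun x => Lfun e c x * Lfun e c' x) := by
  have hprod : (fun x => Lfun e c x * Lfun e c' x)
      = fun x => ∑ p ∈ (Tset n e) ×ˢ (Tset n e),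
          (c p.1 * c' p.2) * chi (p.1 ∆ p.2) x := by
    funext x
    rw [Lfun, Lfun, Finset.sum_mul_sum, Finset.sum_product]
    exact Finset.sum_congr rfl (fun T hT => Finset.sum_congr rfl (fun T' hT' => by
      rw [← chi_mul]; ring))
  rw [hprod]
  refine DD_sum _ _ _ (fun p hp => ?_)
  rcases Finset.mem_product.1 hp with ⟨h1, h2⟩
  rw [Tset, Finset.mem_filter] at h1 h2
  refine DD_chi t hdes _ ?_
  calc (p.1 ∆ p.2).card ≤ (p.1 ∪ p.2).card :=
        Finset.card_le_card (fun a ha => Finset.mem_union.2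
          ((Finset.mem_symmDiff.1 ha).elim (fun h => Or.inl h.1) (fun h => Or.inr h.1)))
    _ ≤ p.1.card + p.2.card := Finset.card_union_le _ _
    _ ≤ 2 * e := by omega
    _ ≤ t := he

lemma Wt_pos {t : ℕ} (hdes : IsRelativeDesign n t Y w R) {r : ℕ} (hr : r ∈ R) :
    0 < Wt n Y w r := by
  obtain ⟨y, hy, hyr⟩ := hdes.2.1 r hr
  refine Finset.sum_pos (fun z hz => hdes.2.2.1 z (Finset.mem_filter.1 hz).1) ?_
  exact ⟨y, Finset.mem_filter.2 ⟨hy, hyr⟩⟩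

lemma r_le_n {t : ℕ} (hdes : IsRelativeDesign n t Y w R) {r : ℕ} (hr : r ∈ R) :
    r ≤ n := by
  obtain ⟨y, _, hyr⟩ := hdes.2.1 r hr
  rw [← hyr]
  exact (hammingDist_le_card_fintype).trans_eq (Fintype.card_fin n)

lemma Lfun_vanish (hdes : IsRelativeDesign n (2 * e) Y w R) (c : Finset (Fin n) → ℝ)
    (hY : ∀ y ∈ Y, Lfun e c y = 0) :
    ∀ x ∈ R.biUnion (shell n), Lfun e c x = 0 := by
  have hdd := DD_mul (2 * e) hdes e le_rfl c c
  unfold DD at hdd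
  simp only at hdd
  have h0 : ∑ y ∈ Y, w y * (Lfun e c y * Lfun e c y) = 0 :=
    Finset.sum_eq_zero (fun y hy => by rw [hY y hy]; ring)
  rw [h0] at hdd
  have hnn : ∀ r ∈ R, 0 ≤ Wt n Y w r / (n.choose r : ℝ)
      * ∑ x ∈ shell n r, Lfun e c x * Lfun e c x :=
    fun r hr => mul_nonneg (div_nonneg (Wt_pos hdes hr).le (Nat.cast_nonneg _))
      (Finset.sum_nonneg (fun x _ => mul_self_nonneg _))
  have hterm := (Finset.sum_eq_zero_iff_of_nonneg hnn).1 hdd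
  intro x hx
  obtain ⟨r, hr, hxr⟩ := Finset.mem_biUnion.1 hx
  have hpos : 0 < Wt n Y w r / (n.choose r : ℝ) :=
    div_pos (Wt_pos hdes hr) (by exact_mod_cast Nat.choose_pos (r_le_n hdes hr))
  have hzero : ∑ x ∈ shell n r, Lfun e c x * Lfun e c x = 0 := by
    have := hterm r hr
    rcases mul_eq_zero.1 this with h | h
    · exact absurd h hpos.ne'
    · exact h
  have := (Finset.sum_eq_zero_iff_of_nonneg
    (fun x _ => mul_self_nonneg (Lfun e c x))).1 hzero x hxr
  exact mul_self_eq_zero.1 this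

/-- The span of degree-`≤ e` characters, as a linear map. -/
noncomputable def Lmap (n e : ℕ) : (Finset (Fin n) → ℝ) →ₗ[ℝ] (X n → ℝ) where
  toFun c := Lfun e c
  map_add' c c' := funext fun x => by
    simp [Lfun, add_mul, Finset.sum_add_distrib]
  map_smul' a c := funext fun x => by
    simp only [Lfun, RingHom.id_apply, Pi.smul_apply, smul_eq_mul, Finset.mul_sum]
    exact Finset.sum_congr rfl (fun T _ => by ring)

/-- Restriction to `S` as a linear map. -/
noncomputable def resmap (n : ℕ) (R : Finset ℕ) :
    (X n → ℝ) →ₗ[ℝ] ({ x // x ∈ R.biUnion (shell n) } → ℝ) :=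
  LinearMap.funLeft ℝ ℝ (fun x => x.1)

lemma Tfilter (e j : ℕ) (hj : j ≤ e) :
    (Tset n e).filter (fun T => T.card = j) = powersetCard j (univ : Finset (Fin n)) := by
  ext T
  simp only [Tset, Finset.mem_filter, Finset.mem_univ, true_and, mem_powersetCard_univ]
  constructor
  · exact fun h => h.2
  · exact fun h => ⟨h ▸ hj, h⟩

lemma span_QSet (n e : ℕ) (R : Finset ℕ) :
    Submodule.span ℝ
      { f : { x // x ∈ R.biUnion (shell n) } → ℝ |
        ∃ j ≤ e, ∃ u : X n, f = fun x => Q n j (hammingDist u x.1) }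
    = LinearMap.range ((resmap n R).comp (Lmap n e)) := by
  classical
  apply le_antisymm
  · rw [Submodule.span_le]
    rintro f ⟨j, hj, u, rfl⟩
    refine ⟨fun T => if T.card = j then chi T u else 0, ?_⟩
    funext x
    show Lfun e _ x.1 = Q n j (hammingDist u x.1)
    unfold Lfun
    have : ∀ T ∈ Tset n e,
        (if T.card = j then chi T u else 0) * chi T x.1
          = if T.card = j then chi T u * chi T x.1 else 0 := by
      intro T _
      rw [ite_mul, zero_mul]
    rw [Finset.sum_congr rfl this, Finset.sum_ite, Finset.sum_const_zero, add_zero,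
      Tfilter e j hj, ← Q_chi]
  · rintro f ⟨c, rfl⟩
    have hrep : ((resmap n R).comp (Lmap n e)) c
        = ∑ T ∈ Tset n e, c T • (fun x : { x // x ∈ R.biUnion (shell n) } => chi T x.1) := by
      funext x
      show Lfun e c x.1 = _
      rw [Lfun, Finset.sum_apply]
      exact Finset.sum_congr rfl (fun T _ => rfl)
    rw [hrep]
    refine Submodule.sum_mem _ (fun T hT => Submodule.smul_mem _ _ ?_)
    have hTe : T.card ≤ e := (Finset.mem_filter.1 hT).2
    have hchi : (fun x : { x // x ∈ R.biUnion (shell n) } => chi T x.1)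
        = ∑ u : X n, (((2:ℝ)^n)⁻¹ * chi T u)
            • (fun x : { x // x ∈ R.biUnion (shell n) } => Q n T.card (hammingDist u x.1)) := by
      funext x
      rw [Finset.sum_apply]
      simp only [Pi.smul_apply, smul_eq_mul]
      have : ∑ u : X n, ((2:ℝ)^n)⁻¹ * chi T u * Q n T.card (hammingDist u x.1)
          = ((2:ℝ)^n)⁻¹ * ∑ u : X n, chi T u * Q n T.card (hammingDist u x.1) := by
        rw [Finset.mul_sum]
        exact Finset.sum_congr rfl (fun u _ => by ring)
      rw [this, sum_chi_Q, inv_mul_cancel_left₀ (by positivity)]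
    rw [hchi]
    exact Submodule.sum_mem _ (fun u _ => Submodule.smul_mem _ _
      (Submodule.subset_span ⟨T.card, hTe, u, rfl⟩))

lemma exists_interp (hdes : IsRelativeDesign n (2 * e) Y w R)
    (htight : Y.card = LDim n e R) (φ : {y // y ∈ Y} → ℝ) :
    ∃ c : Finset (Fin n) → ℝ, ∀ y (hy : y ∈ Y), Lfun e c y = φ ⟨y, hy⟩ := by
  classical
  have hYS : ∀ y ∈ Y, y ∈ R.biUnion (shell n) := fun y hy =>
    Finset.mem_biUnion.2 ⟨_, hdes.1 y hy, Finset.mem_filter.2 ⟨Finset.mem_univ y, rfl⟩⟩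
  set ι : {y // y ∈ Y} → {x // x ∈ R.biUnion (shell n)} :=
    fun y => ⟨y.1, hYS y.1 y.2⟩ with hι
  set V := LinearMap.range ((resmap n R).comp (Lmap n e)) with hV
  let A : V →ₗ[ℝ] ({y // y ∈ Y} → ℝ) := (LinearMap.funLeft ℝ ℝ ι).comp V.subtype
  have happ : ∀ (v : V) (c : Finset (Fin n) → ℝ),
      ((resmap n R).comp (Lmap n e)) c = v.1 →
      ∀ y (hy : y ∈ Y), A v ⟨y, hy⟩ = Lfun e c y := by
    intro v c hc y hy
    show v.1 (ι ⟨y, hy⟩) = Lfun e c y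
    rw [← hc]
    rfl
  have hinj : Function.Injective A := by
    rw [← LinearMap.ker_eq_bot]
    refine (Submodule.eq_bot_iff _).2 fun v hv => ?_
    obtain ⟨c, hc⟩ := v.2
    have hY0 : ∀ y ∈ Y, Lfun e c y = 0 := by
      intro y hy
      rw [← happ v c hc y hy]
      rw [LinearMap.mem_ker] at hv
      rw [hv]
      rfl
    have hS0 := Lfun_vanish e hdes c hY0
    have : v.1 = 0 := by
      funext x
      rw [← hc]
      show Lfun e c x.1 = 0
      exact hS0 x.1 x.2
    exact Subtype.ext this
  have hfr : Module.finrank ℝ V = Fintype.card {y // y ∈ Y} := by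
    rw [Fintype.card_coe, htight, hV]
    unfold LDim
    rw [span_QSet n e R]
  have hcard : Module.finrank ℝ (LinearMap.range A)
      = Module.finrank ℝ ({y // y ∈ Y} → ℝ) := by
    rw [LinearMap.finrank_range_of_inj hinj, hfr, Module.finrank_pi]
  have htop : LinearMap.range A = ⊤ := Submodule.eq_top_of_finrank_eq hcard
  obtain ⟨v, hv⟩ := LinearMap.range_eq_top.1 htop φ
  obtain ⟨c, hc⟩ := v.2
  exact ⟨c, fun y hy => by rw [← happ v c hc y hy, hv]⟩

lemma exists_perm (y₁ y₂ : X n)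
    (h : hammingDist (u₀ n) y₁ = hammingDist (u₀ n) y₂) :
    ∃ π : Equiv.Perm (Fin n), ∀ i, y₂ i = y₁ (π i) := by
  classical
  have hcard : ∀ y : X n, Fintype.card {i // y i = true} = hammingDist (u₀ n) y := by
    intro y
    rw [Fintype.card_subtype, hammingDist_eq_card]
    congr 1
    apply Finset.filter_congr
    intro i _
    cases hy : y i <;> simp [u₀, hy]
  have h₁ : Fintype.card {i // y₂ i = true} = Fintype.card {i // y₁ i = true} := by
    rw [hcard, hcard, h]
  have h₂ : Fintype.card {i // ¬ (y₂ i = true)} = Fintype.card {i // ¬ (y₁ i = true)} := by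
    rw [Fintype.card_subtype_compl, Fintype.card_subtype_compl, h₁]
  let e₁ := Fintype.equivOfCardEq h₁
  let e₂ := Fintype.equivOfCardEq h₂
  refine ⟨(Equiv.sumCompl (fun i => y₂ i = true)).symm.trans
    ((e₁.sumCongr e₂).trans (Equiv.sumCompl (fun i => y₁ i = true))), ?_⟩
  intro i
  simp only [Equiv.trans_apply]
  by_cases hi : y₂ i = true
  · rw [Equiv.sumCompl_symm_apply_of_pos (p := fun i => y₂ i = true) hi, Equiv.sumCongr_apply, Sum.map_inl,
      Equiv.sumCompl_apply_inl]
    rw [hi, (e₁ ⟨i, hi⟩).2]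
  · rw [Equiv.sumCompl_symm_apply_of_neg (p := fun i => y₂ i = true) hi, Equiv.sumCongr_apply, Sum.map_inr,
      Equiv.sumCompl_apply_inr]
    rw [Bool.not_eq_true] at hi
    rw [hi]
    have h3 := (e₂ ⟨i, by simp [hi]⟩).2
    rw [Bool.not_eq_true] at h3
    rw [h3]

lemma hd_perm (π : Equiv.Perm (Fin n)) (x : X n) :
    hammingDist (u₀ n) (fun i => x (π i)) = hammingDist (u₀ n) x := by
  rw [hammingDist_eq_card, hammingDist_eq_card]
  refine Finset.card_nbij' (fun i => π i) (fun i => π.symm i) ?_ ?_ ?_ ?_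
  · intro a ha
    rw [Finset.mem_coe, Finset.mem_filter] at ha ⊢
    exact ⟨Finset.mem_univ _, ha.2⟩
  · intro a ha
    rw [Finset.mem_coe, Finset.mem_filter] at ha ⊢
    refine ⟨Finset.mem_univ _, ?_⟩
    show ¬ (u₀ n (π.symm a) = x (π (π.symm a)))
    rw [Equiv.apply_symm_apply]
    exact fun hh => ha.2 (by simpa [u₀] using hh)
  · intro a _; exact π.symm_apply_apply a
  · intro a _; exact π.apply_symm_apply a

lemma sum_shell_perm (π : Equiv.Perm (Fin n)) (r : ℕ) (F : X n → ℝ) :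
    ∑ x ∈ shell n r, F (fun i => x (π i)) = ∑ x ∈ shell n r, F x := by
  refine Finset.sum_nbij' (i := fun x => fun i => x (π i))
    (j := fun z => fun i => z (π.symm i)) ?_ ?_ ?_ ?_ ?_
  · intro x hx
    rw [shell, Finset.mem_filter] at hx ⊢
    exact ⟨Finset.mem_univ _, (hd_perm π x).trans hx.2⟩
  · intro z hz
    rw [shell, Finset.mem_filter] at hz ⊢
    exact ⟨Finset.mem_univ _, (hd_perm π.symm z).trans hz.2⟩
  · intro x _
    funext i
    simp
  · intro z _
    funext i
    simp
  · intro x _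
    rfl

lemma chi_perm (π : Equiv.Perm (Fin n)) (T : Finset (Fin n)) (x : X n) :
    chi T (fun i => x (π i)) = chi (T.image π) x := by
  rw [chi, chi, Finset.prod_image (fun a _ b _ hab => π.injective hab)]

lemma act_L (π : Equiv.Perm (Fin n)) (c : Finset (Fin n) → ℝ) (x : X n) :
    Lfun e c (fun i => x (π i)) = Lfun e (fun T => c (T.image π.symm)) x := by
  classical
  rw [Lfun, Lfun]
  refine Finset.sum_nbij' (i := fun T => T.image π) (j := fun T => T.image π.symm)
    ?_ ?_ ?_ ?_ ?_
  · intro T hT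
    rw [Tset, Finset.mem_filter] at hT ⊢
    exact ⟨Finset.mem_univ _, by
      rw [Finset.card_image_of_injective _ π.injective]; exact hT.2⟩
  · intro T hT
    rw [Tset, Finset.mem_filter] at hT ⊢
    exact ⟨Finset.mem_univ _, by
      rw [Finset.card_image_of_injective _ π.symm.injective]; exact hT.2⟩
  · intro T _
    rw [Finset.image_image]
    simp
  · intro T _
    rw [Finset.image_image]
    simp
  · intro T _
    rw [chi_perm π T x, Finset.image_image]
    simp

end Design

end TD

/-- The weight of a tight relative `2e`-design in `H(n,2)` is constant on each shell. -/
theorem tight_relativeDesign_weight_constant_on_shells (n e : ℕ) (Y : Finset (X n))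
    (w : X n → ℝ) (R : Finset ℕ)
    (hdes : IsRelativeDesign n (2 * e) Y w R)
    (htight : Y.card = LDim n e R) :
    ∀ r ∈ R, ∀ y₁ ∈ Y, ∀ y₂ ∈ Y,
      hammingDist (u₀ n) y₁ = r → hammingDist (u₀ n) y₂ = r → w y₁ = w y₂ := by
  classical
  intro r hr y₁ hy₁ y₂ hy₂ h1 h2
  obtain ⟨π, hπ⟩ := TD.exists_perm y₁ y₂ (h1.trans h2.symm)
  obtain ⟨c₁, hc₁⟩ := TD.exists_interp e hdes htight
    (fun y => if y.1 = y₁ then 1 else 0)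
  obtain ⟨c₂, hc₂⟩ := TD.exists_interp e hdes htight
    (fun y => if y.1 = y₂ then 1 else 0)
  set c₂' : Finset (Fin n) → ℝ := fun T => c₂ (T.image π.symm) with hc₂'def
  set c₁' : Finset (Fin n) → ℝ := fun T => c₁ (T.image π) with hc₁'def
  -- transported functions
  have k1 : ∀ x : X n, TD.Lfun e c₂' x = TD.Lfun e c₂ (fun i => x (π i)) :=
    fun x => (TD.act_L e π c₂ x).symm
  have k2 : ∀ x : X n, TD.Lfun e c₁' x = TD.Lfun e c₁ (fun i => x (π.symm i)) := by
    intro x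
    have := TD.act_L e π.symm c₁ x
    rw [Equiv.symm_symm] at this
    exact this.symm
  -- the two design identities
  have dd1 := TD.DD_mul (2 * e) hdes e le_rfl c₂' c₁
  have dd2 := TD.DD_mul (2 * e) hdes e le_rfl c₂ c₁'
  unfold TD.DD at dd1 dd2
  simp only at dd1 dd2
  -- evaluate right side of dd1
  have e1 : ∑ y ∈ Y, w y * (TD.Lfun e c₂' y * TD.Lfun e c₁ y) = w y₁ := by
    rw [Finset.sum_eq_single_of_mem y₁ hy₁]
    · have hδ : TD.Lfun e c₁ y₁ = 1 := by
        rw [hc₁ y₁ hy₁]; simp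
      have hv : TD.Lfun e c₂' y₁ = 1 := by
        rw [k1 y₁]
        have : (fun i => y₁ (π i)) = y₂ := funext (fun i => (hπ i).symm)
        rw [this, hc₂ y₂ hy₂]; simp
      rw [hδ, hv]; ring
    · intro y hy hne
      rw [hc₁ y hy, if_neg hne]; ring
  -- evaluate right side of dd2
  have e2 : ∑ y ∈ Y, w y * (TD.Lfun e c₂ y * TD.Lfun e c₁' y) = w y₂ := by
    rw [Finset.sum_eq_single_of_mem y₂ hy₂]
    · have hδ : TD.Lfun e c₂ y₂ = 1 := by
        rw [hc₂ y₂ hy₂]; simp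
      have hv : TD.Lfun e c₁' y₂ = 1 := by
        rw [k2 y₂]
        have : (fun i => y₂ (π.symm i)) = y₁ := by
          funext i
          rw [hπ (π.symm i), Equiv.apply_symm_apply]
        rw [this, hc₁ y₁ hy₁]; simp
      rw [hδ, hv]; ring
    · intro y hy hne
      rw [hc₂ y hy, if_neg hne]; ring
  -- the two left sides agree (reindex each shell by π)
  have lhs_eq : ∑ r ∈ R, Wt n Y w r / (n.choose r : ℝ)
        * ∑ x ∈ shell n r, TD.Lfun e c₂' x * TD.Lfun e c₁ x
      = ∑ r ∈ R, Wt n Y w r / (n.choose r : ℝ)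
        * ∑ x ∈ shell n r, TD.Lfun e c₂ x * TD.Lfun e c₁' x := by
    refine Finset.sum_congr rfl (fun s _ => ?_)
    congr 1
    have hmid := TD.sum_shell_perm π s
      (fun z => TD.Lfun e c₂ z * TD.Lfun e c₁ (fun i => z (π.symm i)))
    calc ∑ x ∈ shell n s, TD.Lfun e c₂' x * TD.Lfun e c₁ x
        = ∑ x ∈ shell n s, (TD.Lfun e c₂ (fun i => x (π i)))
            * TD.Lfun e c₁ (fun i => (fun j => x (π j)) (π.symm i)) := by
          refine Finset.sum_congr rfl (fun x _ => ?_)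
          rw [k1 x]
          congr 2
          funext i
          simp
      _ = ∑ x ∈ shell n s, TD.Lfun e c₂ x
            * TD.Lfun e c₁ (fun i => x (π.symm i)) := hmid
      _ = ∑ x ∈ shell n s, TD.Lfun e c₂ x * TD.Lfun e c₁' x := by
          refine Finset.sum_congr rfl (fun x _ => ?_)
          rw [k2 x]
  rw [← e1, ← dd1, lhs_eq, dd2, e2]
end

section
/- Fix n ≥ 2, integers 1 ≤ r_1 < r_2 ≤ n−1, and positive reals W_{r_1}, W_{r_2}. For any 1 ≤ i ≠ j ≤ n, ⟨φ_i, φ_j⟩ = Σ_{ν=1}^{2} ( W_{r_ν}/(n(n−1)) )·( 4(n²−5n+8)·r_ν² − 4n(n²−5n+8)·r_ν + n(n−1)(n−2)² ); in particular ⟨φ_i, φ_j⟩ = ⟨φ_1, φ_2⟩ for all i ≠ j. -/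
open Finset

/-- The `i`-th standard basis vector `u_i ∈ X_1`. -/
def stdVec (n : ℕ) (i : Fin n) : X n := fun k => decide (k = i)

/-- `φ_i(x) = Q_1(d(u_i,x))`, a column of the first primitive idempotent
(scaled by `|X|`). -/
noncomputable def φ (n : ℕ) (i : Fin n) : X n → ℝ :=
  fun x => Q n 1 (hammingDist (stdVec n i) x)

/-- The inner product
`⟨f,g⟩ = (W₁/C(n,r₁))·Σ_{x ∈ X_{r₁}} f(x)g(x) + (W₂/C(n,r₂))·Σ_{x ∈ X_{r₂}} f(x)g(x)`. -/
noncomputable def ip (n r₁ r₂ : ℕ) (W₁ W₂ : ℝ) (f g : X n → ℝ) : ℝ :=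
  W₁ / (n.choose r₁ : ℝ) * ∑ x ∈ shell n r₁, f x * g x
    + W₂ / (n.choose r₂ : ℝ) * ∑ x ∈ shell n r₂, f x * g x

-- helper lemmas
lemma hd0_eq (n : ℕ) (x : X n) :
    hammingDist (u₀ n) x = (univ.filter fun k => x k = true).card := by
  rw [hammingDist]
  congr 1
  ext k
  cases h : x k <;> simp [u₀, h]

lemma Q1_eq (n u : ℕ) (hu : u ≤ n) : Q n 1 u = (n : ℝ) - 2 * u := by
  rw [Q]
  rw [Finset.sum_range_succ, Finset.sum_range_succ, Finset.sum_range_zero]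
  simp [Nat.choose_one_right, Nat.cast_sub hu]
  ring

lemma hd_stdVec_true (n : ℕ) (x : X n) (i : Fin n) (h : x i = true) :
    hammingDist (stdVec n i) x = hammingDist (u₀ n) x - 1 ∧ 1 ≤ hammingDist (u₀ n) x := by
  rw [hd0_eq]
  have hi : i ∈ univ.filter fun k => x k = true := by simp [h]
  constructor
  · rw [hammingDist]
    have : ({k | stdVec n i k ≠ x k} : Finset (Fin n))
        = (univ.filter fun k => x k = true).erase i := by
      ext k
      by_cases hk : k = i
      · subst hk; simp only [Finset.mem_filter, Finset.mem_erase, Finset.mem_univ, true_and]; simp [stdVec, h]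
      · cases hxk : x k <;> simp only [Finset.mem_filter, Finset.mem_erase, Finset.mem_univ, true_and] <;> simp [stdVec, hk, hxk]
    rw [this, card_erase_of_mem hi]
  · exact Finset.card_pos.mpr ⟨i, hi⟩ |>.le.trans (le_refl _) |> fun _ => Finset.card_pos.mpr ⟨i, hi⟩

lemma hd_stdVec_false (n : ℕ) (x : X n) (i : Fin n) (h : x i = false) :
    hammingDist (stdVec n i) x = hammingDist (u₀ n) x + 1 := by
  rw [hd0_eq, hammingDist]
  have hi : i ∉ univ.filter fun k => x k = true := by simp [h]
  have : ({k | stdVec n i k ≠ x k} : Finset (Fin n))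
      = insert i (univ.filter fun k => x k = true) := by
    ext k
    by_cases hk : k = i
    · subst hk; simp only [Finset.mem_filter, Finset.mem_insert, Finset.mem_univ, true_and]; simp [stdVec, h]
    · cases hxk : x k <;> simp only [Finset.mem_filter, Finset.mem_insert, Finset.mem_univ, true_and] <;> simp [stdVec, hk, hxk]
  rw [this, card_insert_of_notMem hi]

lemma phi_on_shell (n r : ℕ) (hr : 1 ≤ r) (hr2 : r + 1 ≤ n) (i : Fin n) (x : X n)
    (hx : x ∈ shell n r) :
    φ n i x = ((n : ℝ) - 2 * r - 2) + 4 * (if x i = true then (1 : ℝ) else 0) := by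
  have hxr : hammingDist (u₀ n) x = r := by
    simpa [shell] using hx
  rw [φ]
  cases h : x i
  · rw [hd_stdVec_false n x i h, hxr, Q1_eq n (r + 1) hr2]
    push_cast
    ring
  · obtain ⟨hd, _⟩ := hd_stdVec_true n x i h
    rw [hd, hxr, Q1_eq n (r - 1) (by omega)]
    rw [Nat.cast_sub hr]
    push_cast
    rw [if_pos rfl]
    ring

lemma sum_shell_eq (n r : ℕ) (f : X n → ℝ) :
    ∑ x ∈ shell n r, f x
      = ∑ s ∈ (univ : Finset (Fin n)).powersetCard r, f (fun k => decide (k ∈ s)) := by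
  refine Finset.sum_nbij' (i := fun x => univ.filter fun k => x k = true)
    (j := fun s => fun k => decide (k ∈ s)) ?_ ?_ ?_ ?_ ?_
  · intro x hx
    rw [mem_powersetCard]
    refine ⟨subset_univ _, ?_⟩
    have := (mem_filter.mp hx).2
    rwa [hd0_eq] at this
  · intro s hs
    rw [shell, mem_filter]
    refine ⟨mem_univ _, ?_⟩
    rw [hd0_eq]
    have : (univ.filter fun k => decide (k ∈ s) = true) = s := by
      ext k; simp
    rw [this, (mem_powersetCard.mp hs).2]
  · intro x hx
    funext k
    simp
  · intro s hs
    ext k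
    simp
  · intro x hx
    congr 1
    funext k
    simp

lemma count_one (n r : ℕ) (hr : 1 ≤ r) (i : Fin n) :
    ((Finset.univ.powersetCard r).filter (fun s : Finset (Fin n) => i ∈ s)).card
      = (n - 1).choose (r - 1) := by
  have hcard : ((((univ : Finset (Fin n)).erase i)).powersetCard (r - 1)).card
      = (n - 1).choose (r - 1) := by
    rw [card_powersetCard, card_erase_of_mem (mem_univ i), card_univ, Fintype.card_fin]
  rw [← hcard]
  apply Finset.card_nbij' (i := fun s => s.erase i) (j := fun t => insert i t)
  · intro s hs
    rw [mem_coe, mem_powersetCard]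
    obtain ⟨hs1, hs2⟩ := mem_filter.mp hs
    obtain ⟨hsub, hc⟩ := mem_powersetCard.mp hs1
    exact ⟨erase_subset_erase i hsub, by rw [card_erase_of_mem hs2, hc]⟩
  · intro t ht
    rw [mem_coe, mem_filter, mem_powersetCard]
    obtain ⟨hsub, hc⟩ := mem_powersetCard.mp ht
    have hit : i ∉ t := fun h => (notMem_erase i univ) (hsub h)
    refine ⟨⟨subset_univ _, ?_⟩, mem_insert_self _ _⟩
    rw [card_insert_of_notMem hit, hc]
    omega
  · intro s hs
    exact insert_erase (mem_filter.mp hs).2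
  · intro t ht
    have hsub := (mem_powersetCard.mp ht).1
    exact erase_insert (fun h => (notMem_erase i univ) (hsub h))

lemma count_two (n r : ℕ) (hr : 2 ≤ r) (i j : Fin n) (hij : i ≠ j) :
    ((Finset.univ.powersetCard r).filter (fun s : Finset (Fin n) => i ∈ s ∧ j ∈ s)).card
      = (n - 2).choose (r - 2) := by
  have hji : j ∈ (univ : Finset (Fin n)).erase i := mem_erase.mpr ⟨Ne.symm hij, mem_univ j⟩
  have hcard : (((((univ : Finset (Fin n)).erase i).erase j)).powersetCard (r - 2)).card
      = (n - 2).choose (r - 2) := by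
    rw [card_powersetCard, card_erase_of_mem hji, card_erase_of_mem (mem_univ i), card_univ,
      Fintype.card_fin]
    congr 1
  rw [← hcard]
  apply Finset.card_nbij' (i := fun s => (s.erase i).erase j) (j := fun t => insert i (insert j t))
  · intro s hs
    rw [mem_coe, mem_powersetCard]
    obtain ⟨hs1, hsi, hsj⟩ := mem_filter.mp hs
    obtain ⟨hsub, hc⟩ := mem_powersetCard.mp hs1
    refine ⟨erase_subset_erase j (erase_subset_erase i hsub), ?_⟩
    rw [card_erase_of_mem (mem_erase.mpr ⟨Ne.symm hij, hsj⟩ : j ∈ s.erase i),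
      card_erase_of_mem hsi, hc]
    omega
  · intro t ht
    rw [mem_coe, mem_filter, mem_powersetCard]
    obtain ⟨hsub, hc⟩ := mem_powersetCard.mp ht
    have hjt : j ∉ t := fun h => (notMem_erase j _) (hsub h)
    have hit : i ∉ insert j t := by
      intro h
      rcases mem_insert.mp h with h | h
      · exact hij h
      · exact (notMem_erase i univ) ((erase_subset _ _) (hsub h))
    refine ⟨⟨subset_univ _, ?_⟩, mem_insert_self _ _, mem_insert_of_mem (mem_insert_self _ _)⟩
    rw [card_insert_of_notMem hit, card_insert_of_notMem hjt, hc]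
    omega
  · intro s hs
    obtain ⟨_, hsi, hsj⟩ := mem_filter.mp hs
    dsimp only
    rw [insert_erase (mem_erase.mpr ⟨Ne.symm hij, hsj⟩ : j ∈ s.erase i), insert_erase hsi]
  · intro t ht
    have hsub := (mem_powersetCard.mp ht).1
    have hjt : j ∉ t := fun h => (notMem_erase j _) (hsub h)
    have hit : i ∉ insert j t := by
      intro h
      rcases mem_insert.mp h with h | h
      · exact hij h
      · exact (notMem_erase i univ) ((erase_subset _ _) (hsub h))
    dsimp only
    rw [erase_insert hit, erase_insert hjt]

lemma nat_id_one (n r : ℕ) (hn : 1 ≤ n) (hr : 1 ≤ r) :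
    n * (n - 1).choose (r - 1) = n.choose r * r := by
  cases n with
  | zero => omega
  | succ m =>
    cases r with
    | zero => omega
    | succ k => simpa using Nat.add_one_mul_choose_eq m k

lemma nat_id_two (n r : ℕ) (hn : 2 ≤ n) (hr : 2 ≤ r) :
    n * (n - 1) * (n - 2).choose (r - 2) = n.choose r * (r * (r - 1)) := by
  have h1 : (n - 1) * (n - 2).choose (r - 2) = (n - 1).choose (r - 1) * (r - 1) := by
    have h := Nat.add_one_mul_choose_eq (n - 2) (r - 2)
    have e1 : (n - 2) + 1 = n - 1 := by omega
    have e2 : (r - 2) + 1 = r - 1 := by omega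
    rw [e1, e2] at h
    exact h
  calc n * (n - 1) * (n - 2).choose (r - 2)
      = n * ((n - 1) * (n - 2).choose (r - 2)) := by ring
    _ = n * ((n - 1).choose (r - 1) * (r - 1)) := by rw [h1]
    _ = n * (n - 1).choose (r - 1) * (r - 1) := by ring
    _ = n.choose r * r * (r - 1) := by rw [nat_id_one n r (by omega) (by omega)]
    _ = n.choose r * (r * (r - 1)) := by ring

lemma shell_card_eq (n r : ℕ) : (shell n r).card = n.choose r := by
  have h := sum_shell_eq n r (fun _ => (1 : ℝ))
  rw [Finset.sum_const, Finset.sum_const, nsmul_eq_mul, nsmul_eq_mul, mul_one, mul_one,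
    card_powersetCard, card_univ, Fintype.card_fin] at h
  exact_mod_cast h

lemma sum_indicator_one (n r : ℕ) (hr : 1 ≤ r) (i : Fin n) :
    ∑ x ∈ shell n r, (if x i = true then (1 : ℝ) else 0)
      = ((n - 1).choose (r - 1) : ℕ) := by
  rw [sum_shell_eq n r (fun x => if x i = true then (1 : ℝ) else 0)]
  have : ∀ s ∈ (univ : Finset (Fin n)).powersetCard r,
      (if (fun k => decide (k ∈ s)) i = true then (1 : ℝ) else 0)
        = (if i ∈ s then (1 : ℝ) else 0) := by
    intro s _
    by_cases h : i ∈ s <;> simp [h]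
  rw [Finset.sum_congr rfl this, Finset.sum_boole, count_one n r hr i]

lemma sum_indicator_two (n r : ℕ) (hn : 2 ≤ n) (hr : 1 ≤ r) (i j : Fin n) (hij : i ≠ j) :
    (n : ℝ) * ((n : ℝ) - 1) *
        ∑ x ∈ shell n r,
          ((if x i = true then (1 : ℝ) else 0) * (if x j = true then (1 : ℝ) else 0))
      = (n.choose r : ℝ) * ((r : ℝ) * ((r : ℝ) - 1)) := by
  have hstep : ∑ x ∈ shell n r,
      ((if x i = true then (1 : ℝ) else 0) * (if x j = true then (1 : ℝ) else 0))
      = (((Finset.univ.powersetCard r).filter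
          (fun s : Finset (Fin n) => i ∈ s ∧ j ∈ s)).card : ℝ) := by
    rw [sum_shell_eq n r
      (fun x => (if x i = true then (1 : ℝ) else 0) * (if x j = true then (1 : ℝ) else 0))]
    have : ∀ s ∈ (univ : Finset (Fin n)).powersetCard r,
        ((if (fun k => decide (k ∈ s)) i = true then (1 : ℝ) else 0)
          * (if (fun k => decide (k ∈ s)) j = true then (1 : ℝ) else 0))
          = (if i ∈ s ∧ j ∈ s then (1 : ℝ) else 0) := by
      intro s _
      by_cases h1 : i ∈ s <;> by_cases h2 : j ∈ s <;> simp [h1, h2]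
    rw [Finset.sum_congr rfl this, Finset.sum_boole]
  rw [hstep]
  rcases Nat.lt_or_ge r 2 with h2 | h2
  · -- r = 1 : the count is zero and so is the right side
    have hr1 : r = 1 := by omega
    subst hr1
    have hzero : ((Finset.univ.powersetCard 1).filter
        (fun s : Finset (Fin n) => i ∈ s ∧ j ∈ s)) = ∅ := by
      rw [Finset.filter_eq_empty_iff]
      intro s hs
      rintro ⟨h1', h2'⟩
      have hsub : ({i, j} : Finset (Fin n)) ⊆ s := by
        intro k hk
        rcases Finset.mem_insert.mp hk with h | h
        · exact h ▸ h1'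
        · exact (Finset.mem_singleton.mp h) ▸ h2'
      have := Finset.card_le_card hsub
      rw [Finset.card_insert_of_notMem (by simp [hij]), Finset.card_singleton,
        (mem_powersetCard.mp hs).2] at this
      omega
    rw [hzero]
    norm_num
  · -- r ≥ 2 : use the binomial identity
    rw [count_two n r h2 i j hij]
    have hnat := nat_id_two n r hn h2
    have hcast := congrArg (Nat.cast : ℕ → ℝ) hnat
    push_cast [Nat.cast_sub (show 1 ≤ r by omega), Nat.cast_sub (show 1 ≤ n by omega)] at hcast
    linear_combination hcast

lemma shell_sum (n r : ℕ) (hn : 2 ≤ n) (hr : 1 ≤ r) (hr2 : r + 1 ≤ n)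
    (i j : Fin n) (hij : i ≠ j) :
    ∑ x ∈ shell n r, φ n i x * φ n j x
      = (n.choose r : ℝ) / ((n : ℝ) * ((n : ℝ) - 1)) *
          (4 * ((n : ℝ) ^ 2 - 5 * n + 8) * (r : ℝ) ^ 2
            - 4 * n * ((n : ℝ) ^ 2 - 5 * n + 8) * r
            + n * ((n : ℝ) - 1) * ((n : ℝ) - 2) ^ 2) := by
  have hn0 : (n : ℝ) ≠ 0 := by positivity
  have hn1 : (n : ℝ) - 1 ≠ 0 := by
    have : (2 : ℝ) ≤ (n : ℝ) := by exact_mod_cast hn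
    linarith
  set a : ℝ := (n : ℝ) - 2 * r - 2 with ha
  have hsum : ∑ x ∈ shell n r, φ n i x * φ n j x
      = ∑ x ∈ shell n r,
          (a * a + 4 * a * (if x i = true then (1 : ℝ) else 0)
            + 4 * a * (if x j = true then (1 : ℝ) else 0)
            + 16 * ((if x i = true then (1 : ℝ) else 0)
                * (if x j = true then (1 : ℝ) else 0))) := by
    apply Finset.sum_congr rfl
    intro x hx
    rw [phi_on_shell n r hr hr2 i x hx, phi_on_shell n r hr hr2 j x hx]
    ring
  rw [hsum]
  rw [Finset.sum_add_distrib, Finset.sum_add_distrib, Finset.sum_add_distrib,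
    Finset.sum_const, ← Finset.mul_sum, ← Finset.mul_sum, ← Finset.mul_sum,
    nsmul_eq_mul, shell_card_eq n r]
  rw [sum_indicator_one n r hr i, sum_indicator_one n r hr j]
  set T2 : ℝ := ∑ x ∈ shell n r,
      ((if x i = true then (1 : ℝ) else 0) * (if x j = true then (1 : ℝ) else 0)) with hT2
  have h2 : (n : ℝ) * ((n : ℝ) - 1) * T2 = (n.choose r : ℝ) * ((r : ℝ) * ((r : ℝ) - 1)) :=
    sum_indicator_two n r hn hr i j hij
  have h1 : (n : ℝ) * (((n - 1).choose (r - 1) : ℕ) : ℝ) = (n.choose r : ℝ) * (r : ℝ) := by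
    exact_mod_cast nat_id_one n r (by omega) hr
  rw [div_mul_eq_mul_div, eq_div_iff (mul_ne_zero hn0 hn1)]
  rw [ha]
  linear_combination (8 * ((n : ℝ) - 2 * r - 2) * ((n : ℝ) - 1)) * h1 + 16 * h2

/-- Proposition 4.1 (3): for `i ≠ j`,
`⟨φ_i, φ_j⟩ = Σ_{ν=1,2} (W_ν/(n(n−1)))·(4(n²−5n+8)r_ν² − 4n(n²−5n+8)r_ν + n(n−1)(n−2)²)`;
in particular the value is independent of the pair `(i,j)`. -/
theorem ip_phi_phi_offdiag (n r₁ r₂ : ℕ) (W₁ W₂ : ℝ) (hn : 2 ≤ n)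
    (hr₁ : 1 ≤ r₁) (hr₁₂ : r₁ < r₂) (hr₂ : r₂ ≤ n - 1)
    (hW₁ : 0 < W₁) (hW₂ : 0 < W₂) :
    ∀ i j : Fin n, i ≠ j →
      ip n r₁ r₂ W₁ W₂ (φ n i) (φ n j)
        = W₁ / ((n : ℝ) * ((n : ℝ) - 1)) *
            (4 * ((n : ℝ) ^ 2 - 5 * n + 8) * (r₁ : ℝ) ^ 2
              - 4 * n * ((n : ℝ) ^ 2 - 5 * n + 8) * r₁
              + n * ((n : ℝ) - 1) * ((n : ℝ) - 2) ^ 2)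
          + W₂ / ((n : ℝ) * ((n : ℝ) - 1)) *
            (4 * ((n : ℝ) ^ 2 - 5 * n + 8) * (r₂ : ℝ) ^ 2
              - 4 * n * ((n : ℝ) ^ 2 - 5 * n + 8) * r₂
              + n * ((n : ℝ) - 1) * ((n : ℝ) - 2) ^ 2) := by
  intro i j hij
  have hr₂n : r₂ + 1 ≤ n := by omega
  have hr₁n : r₁ + 1 ≤ n := by omega
  rw [ip, shell_sum n r₁ hn hr₁ hr₁n i j hij, shell_sum n r₂ hn (by omega) hr₂n i j hij]
  have hC₁ : (n.choose r₁ : ℝ) ≠ 0 :=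
    Nat.cast_ne_zero.mpr (Nat.choose_pos (by omega)).ne'
  have hC₂ : (n.choose r₂ : ℝ) ≠ 0 :=
    Nat.cast_ne_zero.mpr (Nat.choose_pos (by omega)).ne'
  have hn0 : (n : ℝ) ≠ 0 := by positivity
  have hn1 : (n : ℝ) - 1 ≠ 0 := by
    have : (2 : ℝ) ≤ (n : ℝ) := by exact_mod_cast hn
    linarith
  field_simp
end

section
/- Let V be a real inner product space and let φ_1,…,φ_n, φ_0 ∈ V satisfy ⟨φ_i,φ_i⟩ = c_0 for 1 ≤ i ≤ n, ⟨φ_i,φ_j⟩ = c_2 for 1 ≤ i ≠ j ≤ n, ⟨φ_i,φ_0⟩ = d_0 for 1 ≤ i ≤ n, and ⟨φ_0,φ_0⟩ = W, where c_0 ≠ c_2 and c_0 + (i−1)c_2 ≠ 0 for 1 ≤ i ≤ n. Define h_1 = φ_1, h_i = φ_i − (c_2/(c_0+(i−2)c_2))·Σ_{j=1}^{i−1} φ_j for 2 ≤ i ≤ n, and h_{n+1} = φ_0 − (d_0/(c_0+(n−1)c_2))·Σ_{j=1}^{n} φ_j. Then h_1,…,h_{n+1} are pairwise orthogonal (they are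 the Gram–Schmidt orthogonalization of φ_1,…,φ_n,φ_0 in this order), ‖h_1‖² = c_0, ‖h_i‖² = (c_0−c_2)(c_0+(i−1)c_2)/(c_0+(i−2)c_2) for 2 ≤ i ≤ n, and ‖h_{n+1}‖² = W − n·d_0²/(c_0+(n−1)c_2). -/
open Finset
open scoped RealInnerProductSpace

/-- Proposition 4.2: explicit Gram–Schmidt orthogonalization of a system
`φ_1,…,φ_n, φ_0` whose Gram matrix has the pattern
`⟨φ_i,φ_i⟩ = c₀`, `⟨φ_i,φ_j⟩ = c₂` (i ≠ j), `⟨φ_i,φ_0⟩ = d₀`, `⟨φ_0,φ_0⟩ = W`.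
(Indices are 0-based: `h k` below is the paper's `h_{k+1}` and `φ k` is `φ_{k+1}`.) -/
theorem gram_schmidt_equicorrelated {V : Type*} [NormedAddCommGroup V]
    [InnerProductSpace ℝ V] (n : ℕ) (hn : 1 ≤ n) (φ : Fin n → V) (φ₀ : V)
    (c₀ c₂ d₀ W : ℝ)
    (hcc : c₀ ≠ c₂)
    (hnz : ∀ k : Fin n, c₀ + (k : ℝ) * c₂ ≠ 0)
    (hdiag : ∀ i : Fin n, ⟪φ i, φ i⟫ = c₀)
    (hoff : ∀ i j : Fin n, i ≠ j → ⟪φ i, φ j⟫ = c₂)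
    (hd : ∀ i : Fin n, ⟪φ i, φ₀⟫ = d₀)
    (hW : ⟪φ₀, φ₀⟫ = W) :
    let h : Fin n → V := fun k =>
      φ k - (c₂ / (c₀ + ((k : ℝ) - 1) * c₂)) •
        ∑ j ∈ Finset.univ.filter (fun j : Fin n => j < k), φ j
    let hLast : V := φ₀ - (d₀ / (c₀ + ((n : ℝ) - 1) * c₂)) • ∑ j, φ j
    (∀ k l : Fin n, k ≠ l → ⟪h k, h l⟫ = 0) ∧
    (∀ k : Fin n, ⟪h k, hLast⟫ = 0) ∧
    (⟪h ⟨0, hn⟩, h ⟨0, hn⟩⟫ = c₀) ∧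
    (∀ k : Fin n, 1 ≤ (k : ℕ) →
      ⟪h k, h k⟫ = (c₀ - c₂) * (c₀ + (k : ℝ) * c₂) / (c₀ + ((k : ℝ) - 1) * c₂)) ∧
    (⟪hLast, hLast⟫ = W - n * d₀ ^ 2 / (c₀ + ((n : ℝ) - 1) * c₂)) := by
  intro h hLast
  -- inner products with a sum of the `φ`'s
  have hφφ : ∀ i j : Fin n, ⟪φ i, φ j⟫ = if i = j then c₀ else c₂ := by
    intro i j
    by_cases hij : i = j
    · simpa [hij] using hdiag j
    · simp [hij, hoff i j hij]
  have hsum1 : ∀ (i : Fin n) (s : Finset (Fin n)),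
      ⟪φ i, ∑ j ∈ s, φ j⟫ = (s.card : ℝ) * c₂ + (if i ∈ s then c₀ - c₂ else 0) := by
    intro i s
    rw [inner_sum]
    have hc : ∀ j ∈ s, ⟪φ i, φ j⟫ = c₂ + (if i = j then c₀ - c₂ else 0) := by
      intro j _
      rw [hφφ]
      by_cases hij : i = j <;> simp [hij]
    rw [Finset.sum_congr rfl hc, Finset.sum_add_distrib, Finset.sum_const,
      Finset.sum_ite_eq s i (fun _ => c₀ - c₂)]
    simp [mul_comm]
  have hsum2 : ∀ s t : Finset (Fin n),
      ⟪∑ i ∈ s, φ i, ∑ j ∈ t, φ j⟫ =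
        (s.card : ℝ) * t.card * c₂ + ((s ∩ t).card : ℝ) * (c₀ - c₂) := by
    intro s t
    rw [sum_inner, Finset.sum_congr rfl (fun i _ => hsum1 i t),
      Finset.sum_add_distrib, Finset.sum_const, Finset.sum_ite_mem,
      Finset.sum_const]
    ring
  have hsum0 : ∀ s : Finset (Fin n), ⟪∑ i ∈ s, φ i, φ₀⟫ = (s.card : ℝ) * d₀ := by
    intro s
    rw [sum_inner, Finset.sum_congr rfl (fun i _ => hd i), Finset.sum_const]
    simp [mul_comm]
  -- cardinalities
  have hScard : ∀ k : Fin n, ((univ.filter (fun j : Fin n => j < k)).card : ℝ) = k := by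
    intro k
    rw [show univ.filter (fun j : Fin n => j < k) = Iio k from Finset.filter_gt_eq_Iio]
    simp
  have hSint : ∀ k l : Fin n, k < l →
      univ.filter (fun j : Fin n => j < k) ∩ univ.filter (fun j : Fin n => j < l)
        = univ.filter (fun j : Fin n => j < k) := by
    intro k l hkl
    ext j
    simp only [mem_inter, mem_filter, mem_univ, true_and, and_iff_left_iff_imp]
    exact fun hjk => lt_trans hjk hkl
  have hmem : ∀ k l : Fin n, k ∈ univ.filter (fun j : Fin n => j < l) ↔ k < l := by
    intro k l; simp
  -- nonvanishing denominators
  have hD : ∀ k : Fin n, c₀ + ((k : ℝ) - 1) * c₂ ≠ 0 := by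
    intro k
    rcases Nat.eq_zero_or_pos (k : ℕ) with h0 | h1
    · rw [h0]
      push_cast
      rw [show c₀ + (0 - 1) * c₂ = c₀ - c₂ by ring]
      exact sub_ne_zero.mpr hcc
    · have hm : (k : ℕ) - 1 < n := lt_of_le_of_lt (Nat.sub_le _ _) k.isLt
      have := hnz ⟨(k : ℕ) - 1, hm⟩
      have hcast : (((k : ℕ) - 1 : ℕ) : ℝ) = (k : ℝ) - 1 := by
        push_cast [Nat.cast_sub h1]
        ring
      simpa [hcast] using this
  have hDn : c₀ + ((n : ℝ) - 1) * c₂ ≠ 0 := by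
    have hm : n - 1 < n := Nat.sub_lt (Nat.lt_of_lt_of_le Nat.zero_lt_one hn) Nat.one_pos
    have := hnz ⟨n - 1, hm⟩
    have hcast : ((n - 1 : ℕ) : ℝ) = (n : ℝ) - 1 := by
      push_cast [Nat.cast_sub hn]
      ring
    simpa [hcast] using this
  -- a master computation for `⟪h k, h l⟫` when `k < l`
  have key : ∀ k l : Fin n, k < l → ⟪h k, h l⟫ = 0 := by
    intro k l hkl
    have hne : k ≠ l := ne_of_lt hkl
    simp only [h]
    rw [inner_sub_left, inner_sub_right, inner_sub_right]
    rw [real_inner_smul_left, real_inner_smul_right, real_inner_smul_left,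
      real_inner_smul_right, hφφ, hsum1, hsum2, hSint k l hkl,
      show ⟪∑ j ∈ univ.filter (fun j : Fin n => j < k), φ j, φ l⟫ =
          ⟪φ l, ∑ j ∈ univ.filter (fun j : Fin n => j < k), φ j⟫ from
        real_inner_comm _ _, hsum1]
    have hkl' : k ∈ univ.filter (fun j : Fin n => j < l) := (hmem k l).mpr hkl
    have hlk' : l ∉ univ.filter (fun j : Fin n => j < k) := by
      rw [hmem]; exact fun hc => absurd (lt_trans hc hkl) (lt_irrefl _)
    rw [if_neg hne, if_pos hkl', if_neg hlk', hScard, hScard]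
    field_simp [hD k, hD l, (show c₀ + c₂ * (((k : Fin n) : ℝ) - 1) ≠ 0 by rw [mul_comm]; exact hD k), (show c₀ + c₂ * (((l : Fin n) : ℝ) - 1) ≠ 0 by rw [mul_comm]; exact hD l)]
    ring
  refine ⟨?_, ?_, ?_, ?_, ?_⟩
  · -- pairwise orthogonality
    intro k l hne
    rcases lt_or_gt_of_ne hne with hkl | hlk
    · exact key k l hkl
    · rw [real_inner_comm]; exact key l k hlk
  · -- orthogonality to the last vector
    intro k
    simp only [h, hLast]
    rw [inner_sub_left, inner_sub_right, inner_sub_right]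
    rw [real_inner_smul_left, real_inner_smul_right, real_inner_smul_left,
      real_inner_smul_right, hd, hsum0,
      show ⟪φ k, ∑ j, φ j⟫ = ⟪φ k, ∑ j ∈ univ, φ j⟫ from rfl, hsum1,
      show ⟪∑ j ∈ univ.filter (fun j : Fin n => j < k), φ j, ∑ j, φ j⟫ =
          ⟪∑ j ∈ univ.filter (fun j : Fin n => j < k), φ j, ∑ j ∈ univ, φ j⟫ from rfl,
      hsum2]
    rw [if_pos (mem_univ k), Finset.inter_comm, Finset.univ_inter, hScard,
      Finset.card_univ, Fintype.card_fin]
    field_simp [hD k, hDn]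
    ring
  · -- squared norm of the first vector
    simp only [h]
    have he : univ.filter (fun j : Fin n => j < (⟨0, hn⟩ : Fin n)) = ∅ := by
      ext j
      simp only [mem_filter, mem_univ, true_and, notMem_empty, iff_false]
      exact fun hc => absurd hc (by simp [Fin.lt_def])
    rw [he]
    simpa using hdiag ⟨0, hn⟩
  · -- squared norms of the middle vectors
    intro k hk1
    simp only [h]
    rw [inner_sub_left, inner_sub_right, inner_sub_right]
    rw [real_inner_smul_left, real_inner_smul_right, real_inner_smul_left,
      real_inner_smul_right, hφφ, hsum1, hsum2, Finset.inter_self,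
      show ⟪∑ j ∈ univ.filter (fun j : Fin n => j < k), φ j, φ k⟫ =
          ⟪φ k, ∑ j ∈ univ.filter (fun j : Fin n => j < k), φ j⟫ from
        real_inner_comm _ _, hsum1]
    have hkk : k ∉ univ.filter (fun j : Fin n => j < k) := by
      rw [hmem]; exact lt_irrefl k
    rw [if_pos rfl, if_neg hkk, hScard]
    field_simp [hD k, (show c₀ + c₂ * (((k : Fin n) : ℝ) - 1) ≠ 0 by rw [mul_comm]; exact hD k)]
    ring
  · -- squared norm of the last vector
    simp only [hLast]
    rw [inner_sub_left, inner_sub_right, inner_sub_right]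
    rw [real_inner_smul_left, real_inner_smul_right, real_inner_smul_left,
      real_inner_smul_right, hW,
      show ⟪∑ j, φ j, φ₀⟫ = ⟪∑ j ∈ univ, φ j, φ₀⟫ from rfl, hsum0,
      show ⟪φ₀, ∑ j, φ j⟫ = ⟪∑ j ∈ univ, φ j, φ₀⟫ from real_inner_comm _ _, hsum0,
      show ⟪∑ j, φ j, (∑ j, φ j : V)⟫ = ⟪∑ j ∈ univ, φ j, ∑ j ∈ univ, φ j⟫ from rfl,
      hsum2, Finset.inter_self, Finset.card_univ, Fintype.card_fin]
    field_simp [hDn]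
    ring
end

section
/- Let (Y,w) be a relative 2-design in H(n,2) with respect to u₀ = (0,…,0), supported on the two shells X_{r_1} and X_{r_2} (1 ≤ r_1 < r_2 ≤ n−1), with constant weight w_{r_i} on Y_{r_i} (i = 1,2), and let λ_1, λ_2 be the constants with Σ_{y ∈ Y, ū ⊆ ȳ} w(y) = λ_j for every u with |ū| = j (j = 1,2). For u ∈ X_1 and i = 1,2 set λ^{(i)}_1(u) = |{y ∈ Y_{r_i} : ū ⊆ ȳ}|. Then λ^{(1)}_1(u) and λ^{(2)}_1(u) do not depend on the choice of u ∈ X_1, and λ^{(1)}_1 = ( (r_2−1)·λ_1 − (n−1)·λ_2 ) / ( (r_2−r_1)·w_{r_1} ) and λ^{(2)}_1 = ( (n−1)·λ_2 − (r_1−1)·λ_1 ) / ( (r_2−r_1)·w_{r_2} ). -/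
open Finset

/-- The support `x̄ = {i : x_i = 1}` of a binary vector. -/
def supp (n : ℕ) (x : X n) : Finset (Fin n) :=
  Finset.univ.filter (fun i => x i = true)

lemma supp_card_eq (n : ℕ) (y : X n) : (supp n y).card = hammingDist (u₀ n) y := by
  unfold supp hammingDist u₀
  congr 1
  ext i
  simp

/-- Proposition 4.7 (1)(a): for a relative 2-design on two shells with constant
weights, the number `λ₁⁽ⁱ⁾(u) = |{y ∈ Y_{r_i} : ū ⊆ ȳ}|` is independent of
`u ∈ X_1` and given by explicit formulas. -/
theorem relative2design_lambda1_shellwise (n r₁ r₂ : ℕ) (Y : Finset (X n))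
    (w : X n → ℝ) (w₁ w₂ lam₁ lam₂ : ℝ)
    (hr₁ : 1 ≤ r₁) (hr₁₂ : r₁ < r₂) (hr₂ : r₂ ≤ n - 1)
    (hdes : IsRelativeDesign n 2 Y w {r₁, r₂})
    (hw₁ : ∀ y ∈ Y, hammingDist (u₀ n) y = r₁ → w y = w₁)
    (hw₂ : ∀ y ∈ Y, hammingDist (u₀ n) y = r₂ → w y = w₂)
    (hlam₁ : ∀ u : X n, (supp n u).card = 1 →
      ∑ y ∈ Y.filter (fun y => supp n u ⊆ supp n y), w y = lam₁)
    (hlam₂ : ∀ u : X n, (supp n u).card = 2 →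
      ∑ y ∈ Y.filter (fun y => supp n u ⊆ supp n y), w y = lam₂) :
    ∀ u ∈ shell n 1,
      ((Y.filter (fun y => hammingDist (u₀ n) y = r₁ ∧ supp n u ⊆ supp n y)).card : ℝ)
          = (((r₂ : ℝ) - 1) * lam₁ - ((n : ℝ) - 1) * lam₂)
            / (((r₂ : ℝ) - (r₁ : ℝ)) * w₁) ∧
      ((Y.filter (fun y => hammingDist (u₀ n) y = r₂ ∧ supp n u ⊆ supp n y)).card : ℝ)
          = (((n : ℝ) - 1) * lam₂ - ((r₁ : ℝ) - 1) * lam₁)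
            / (((r₂ : ℝ) - (r₁ : ℝ)) * w₂) := by
  classical
  obtain ⟨hY, hmeet, hpos, -⟩ := hdes
  obtain ⟨y₁, hy₁Y, hy₁d⟩ := hmeet r₁ (by simp)
  obtain ⟨y₂, hy₂Y, hy₂d⟩ := hmeet r₂ (by simp)
  have hw₁pos : 0 < w₁ := by rw [← hw₁ y₁ hy₁Y hy₁d]; exact hpos y₁ hy₁Y
  have hw₂pos : 0 < w₂ := by rw [← hw₂ y₂ hy₂Y hy₂d]; exact hpos y₂ hy₂Y
  have hn : 3 ≤ n := by omega
  intro u hu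
  have hud : hammingDist (u₀ n) u = 1 := by simpa [shell] using hu
  have hucard : (supp n u).card = 1 := by rw [supp_card_eq, hud]
  obtain ⟨i₀, hi₀⟩ := Finset.card_eq_one.mp hucard
  have hsub : ∀ y : X n, (supp n u ⊆ supp n y) ↔ i₀ ∈ supp n y := by
    intro y; rw [hi₀, Finset.singleton_subset_iff]
  set N₁ := (Y.filter (fun y => hammingDist (u₀ n) y = r₁ ∧ supp n u ⊆ supp n y)).card
    with hN₁
  set N₂ := (Y.filter (fun y => hammingDist (u₀ n) y = r₂ ∧ supp n u ⊆ supp n y)).card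
    with hN₂
  -- split a sum over {y ∈ Y : i₀ ∈ ȳ} into the two shells
  have hsplit : ∀ f : X n → ℝ,
      ∑ y ∈ Y.filter (fun y => i₀ ∈ supp n y), f y
        = ∑ y ∈ Y.filter (fun y => hammingDist (u₀ n) y = r₁ ∧ i₀ ∈ supp n y), f y
          + ∑ y ∈ Y.filter (fun y => hammingDist (u₀ n) y = r₂ ∧ i₀ ∈ supp n y), f y := by
    intro f
    have e1 : (Y.filter (fun y => i₀ ∈ supp n y)).filter
        (fun y => hammingDist (u₀ n) y = r₁)
        = Y.filter (fun y => hammingDist (u₀ n) y = r₁ ∧ i₀ ∈ supp n y) := by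
      rw [Finset.filter_filter]
      apply Finset.filter_congr
      intro y _; exact and_comm
    have e2 : (Y.filter (fun y => i₀ ∈ supp n y)).filter
        (fun y => ¬ hammingDist (u₀ n) y = r₁)
        = Y.filter (fun y => hammingDist (u₀ n) y = r₂ ∧ i₀ ∈ supp n y) := by
      rw [Finset.filter_filter]
      apply Finset.filter_congr
      intro y hy
      have hYy := hY y hy
      simp only [Finset.mem_insert, Finset.mem_singleton] at hYy
      constructor
      · rintro ⟨h1, h2⟩; exact ⟨hYy.resolve_left h2, h1⟩
      · rintro ⟨h1, h2⟩; exact ⟨h2, by omega⟩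
    rw [← Finset.sum_filter_add_sum_filter_not (Y.filter (fun y => i₀ ∈ supp n y))
        (fun y => hammingDist (u₀ n) y = r₁) f, e1, e2]
  have hfil₁ : Y.filter (fun y => hammingDist (u₀ n) y = r₁ ∧ i₀ ∈ supp n y)
      = Y.filter (fun y => hammingDist (u₀ n) y = r₁ ∧ supp n u ⊆ supp n y) := by
    apply Finset.filter_congr; intro y _; rw [hsub y]
  have hfil₂ : Y.filter (fun y => hammingDist (u₀ n) y = r₂ ∧ i₀ ∈ supp n y)
      = Y.filter (fun y => hammingDist (u₀ n) y = r₂ ∧ supp n u ⊆ supp n y) := by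
    apply Finset.filter_congr; intro y _; rw [hsub y]
  -- Equation 1 : w₁ N₁ + w₂ N₂ = lam₁
  have hE1 : w₁ * (N₁ : ℝ) + w₂ * (N₂ : ℝ) = lam₁ := by
    have h := hlam₁ u hucard
    have hfil : Y.filter (fun y => supp n u ⊆ supp n y)
        = Y.filter (fun y => i₀ ∈ supp n y) := by
      apply Finset.filter_congr; intro y _; rw [hsub y]
    rw [hfil, hsplit, hfil₁, hfil₂] at h
    have c1 : ∑ y ∈ Y.filter (fun y => hammingDist (u₀ n) y = r₁ ∧ supp n u ⊆ supp n y),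
        w y = w₁ * (N₁ : ℝ) := by
      rw [Finset.sum_congr rfl (fun y hy =>
        hw₁ y (Finset.mem_filter.mp hy).1 (Finset.mem_filter.mp hy).2.1),
        Finset.sum_const, nsmul_eq_mul, hN₁, mul_comm]
    have c2 : ∑ y ∈ Y.filter (fun y => hammingDist (u₀ n) y = r₂ ∧ supp n u ⊆ supp n y),
        w y = w₂ * (N₂ : ℝ) := by
      rw [Finset.sum_congr rfl (fun y hy =>
        hw₂ y (Finset.mem_filter.mp hy).1 (Finset.mem_filter.mp hy).2.1),
        Finset.sum_const, nsmul_eq_mul, hN₂, mul_comm]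
    rw [c1, c2] at h
    exact h
  -- Equation 2 : (r₁-1) w₁ N₁ + (r₂-1) w₂ N₂ = (n-1) lam₂
  have hE2 : ((r₁ : ℝ) - 1) * (w₁ * (N₁ : ℝ)) + ((r₂ : ℝ) - 1) * (w₂ * (N₂ : ℝ))
      = ((n : ℝ) - 1) * lam₂ := by
    set v : Fin n → X n := fun j i => decide (i = i₀ ∨ i = j) with hv
    have hvsupp : ∀ j, supp n (v j) = insert i₀ {j} := by
      intro j; ext i; simp [supp, v]
    have hdouble : ∑ j ∈ Finset.univ.erase i₀, lam₂
        = ∑ y ∈ Y.filter (fun y => i₀ ∈ supp n y),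
            w y * (((supp n y).card : ℝ) - 1) := by
      calc ∑ j ∈ Finset.univ.erase i₀, lam₂
          = ∑ j ∈ Finset.univ.erase i₀, ∑ y ∈ Y,
              (if i₀ ∈ supp n y ∧ j ∈ supp n y then w y else 0) := by
            apply Finset.sum_congr rfl
            intro j hj
            have hjne : j ≠ i₀ := (Finset.mem_erase.mp hj).1
            have hc : (supp n (v j)).card = 2 := by
              rw [hvsupp, Finset.card_insert_of_notMem (by simp [Ne.symm hjne]),
                Finset.card_singleton]
            rw [← hlam₂ (v j) hc, Finset.sum_filter]
            apply Finset.sum_congr rfl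
            intro y _
            have hiff : (supp n (v j) ⊆ supp n y) ↔ (i₀ ∈ supp n y ∧ j ∈ supp n y) := by
              rw [hvsupp, Finset.insert_subset_iff, Finset.singleton_subset_iff]
            exact if_congr hiff rfl rfl
        _ = ∑ y ∈ Y, ∑ j ∈ Finset.univ.erase i₀,
              (if i₀ ∈ supp n y ∧ j ∈ supp n y then w y else 0) := Finset.sum_comm
        _ = ∑ y ∈ Y, (if i₀ ∈ supp n y
              then w y * (((supp n y).card : ℝ) - 1) else 0) := by
            apply Finset.sum_congr rfl
            intro y _
            by_cases hi : i₀ ∈ supp n y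
            · simp only [hi, true_and, if_true]
              rw [← Finset.sum_filter]
              have hset : (Finset.univ.erase i₀).filter (fun j => j ∈ supp n y)
                  = (supp n y).erase i₀ := by
                ext j; simp [and_comm]
              rw [hset, Finset.sum_const, Finset.card_erase_of_mem hi, nsmul_eq_mul,
                Nat.cast_sub (Finset.card_pos.mpr ⟨i₀, hi⟩)]
              push_cast; ring
            · simp [hi]
        _ = ∑ y ∈ Y.filter (fun y => i₀ ∈ supp n y),
              w y * (((supp n y).card : ℝ) - 1) := (Finset.sum_filter _ _).symm
    have hlhs : ∑ j ∈ Finset.univ.erase i₀, lam₂ = ((n : ℝ) - 1) * lam₂ := by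
      rw [Finset.sum_const, Finset.card_erase_of_mem (Finset.mem_univ _),
        Finset.card_univ, Fintype.card_fin, nsmul_eq_mul, Nat.cast_sub (by omega)]
      push_cast; ring
    rw [hlhs, hsplit, hfil₁, hfil₂] at hdouble
    have c1 : ∑ y ∈ Y.filter (fun y => hammingDist (u₀ n) y = r₁ ∧ supp n u ⊆ supp n y),
        w y * (((supp n y).card : ℝ) - 1) = ((r₁ : ℝ) - 1) * (w₁ * (N₁ : ℝ)) := by
      have h : ∀ y ∈ Y.filter (fun y => hammingDist (u₀ n) y = r₁ ∧ supp n u ⊆ supp n y),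
          w y * (((supp n y).card : ℝ) - 1) = w₁ * ((r₁ : ℝ) - 1) := by
        intro y hy
        have hm := Finset.mem_filter.mp hy
        rw [hw₁ y hm.1 hm.2.1, supp_card_eq, hm.2.1]
      rw [Finset.sum_congr rfl h, Finset.sum_const, nsmul_eq_mul, hN₁]
      ring
    have c2 : ∑ y ∈ Y.filter (fun y => hammingDist (u₀ n) y = r₂ ∧ supp n u ⊆ supp n y),
        w y * (((supp n y).card : ℝ) - 1) = ((r₂ : ℝ) - 1) * (w₂ * (N₂ : ℝ)) := by
      have h : ∀ y ∈ Y.filter (fun y => hammingDist (u₀ n) y = r₂ ∧ supp n u ⊆ supp n y),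
          w y * (((supp n y).card : ℝ) - 1) = w₂ * ((r₂ : ℝ) - 1) := by
        intro y hy
        have hm := Finset.mem_filter.mp hy
        rw [hw₂ y hm.1 hm.2.1, supp_card_eq, hm.2.1]
      rw [Finset.sum_congr rfl h, Finset.sum_const, nsmul_eq_mul, hN₂]
      ring
    rw [c1, c2] at hdouble
    linarith
  have hden : ((r₂ : ℝ) - (r₁ : ℝ)) ≠ 0 := by
    have : (r₁ : ℝ) < (r₂ : ℝ) := by exact_mod_cast hr₁₂
    exact sub_ne_zero.mpr (ne_of_gt this)
  constructor
  · rw [eq_div_iff (mul_ne_zero hden (ne_of_gt hw₁pos))]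
    linear_combination ((r₂ : ℝ) - 1) * hE1 - hE2
  · rw [eq_div_iff (mul_ne_zero hden (ne_of_gt hw₂pos))]
    linear_combination hE2 - ((r₁ : ℝ) - 1) * hE1
end
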